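/- arXiv:1206.4083 — 6 statements merged into one kernel-verified Lean document; each statement's English description precedes it below -/
import Mathlib

section
/- Let Ω, U ⊆ ℝⁿ be open sets, Φ : Ω → U a C² diffeomorphism, X : Ω → ℝⁿ a C¹ vector field, and h : U → ℝ a C¹ function that vanishes nowhere on U, such that the pushforward of X by Φ equals h·E, i.e. DΦ(x)·X(x) = h(Φ(x))·Φ(x) for all x ∈ Ω. Let Ȳ : U → ℝⁿ be a C¹ vector field with [E, Ȳ] = 0 on U, and define the pullback Y(x) = (DΦ(x))⁻¹·Ȳ(Φ(x)). Then Y is a Lie symmetry of X: [X, Y](x) = μ(x)·X(x) for all x ∈ Ω, where μ(x) = −(∇h(Φ(x))·Ȳ(Φ(x)))/h(Φ(x)). -/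
/-- The Lie bracket of two vector fields on `ℝⁿ`:
`[X,Y](x) = DY(x)·X(x) − DX(x)·Y(x)`. -/
noncomputable def lieBracket (n : ℕ) (X Y : (Fin n → ℝ) → (Fin n → ℝ))
    (x : Fin n → ℝ) : Fin n → ℝ :=
  fderiv ℝ Y x (X x) - fderiv ℝ X x (Y x)

/-- The Euler vector field `E(u) = u` on `ℝⁿ`. -/
def eulerVF (n : ℕ) : (Fin n → ℝ) → (Fin n → ℝ) := fun u => u

/-!
Since `DΦ` is invertible with inverse `DΨ ∘ Φ`, the hypotheses say that near every point of `Ω`,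
`X` and `Y` are the pullbacks by `Φ` of `h • E` and `Ȳ`. The Lie bracket commutes with pullbacks
by `C²` maps, so `[X, Y]` is the pullback of `[h • E, Ȳ] = h • [E, Ȳ] - Ȳ(h) • E = -Ȳ(h) • E`,
which is `-Ȳ(h) / h` times the pullback `X` of `h • E`.
-/

open Set Filter Topology

section LocalInverse

variable {𝕜 : Type*} [NontriviallyNormedField 𝕜]
  {E F : Type*} [NormedAddCommGroup E] [NormedSpace 𝕜 E] [NormedAddCommGroup F] [NormedSpace 𝕜 F]
  {f : E → F} {g : F → E} {x : E}

theorem fderiv_comp_fderiv_of_eventually_leftInverse (hg : DifferentiableAt 𝕜 g (f x))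
    (hf : DifferentiableAt 𝕜 f x) (hgf : g ∘ f =ᶠ[𝓝 x] id) :
    (fderiv 𝕜 g (f x)).comp (fderiv 𝕜 f x) = ContinuousLinearMap.id 𝕜 E := by
  rw [← fderiv_comp x hg hf, hgf.fderiv_eq, fderiv_id]

theorem inverse_fderiv_eq_fderiv_of_localInverse (hf : DifferentiableAt 𝕜 f x)
    (hg : DifferentiableAt 𝕜 g (f x)) (hgf : g ∘ f =ᶠ[𝓝 x] id)
    (hfg : f ∘ g =ᶠ[𝓝 (f x)] id) :
    (fderiv 𝕜 f x).inverse = fderiv 𝕜 g (f x) := by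
  have hx : g (f x) = x := hgf.self_of_nhds
  have hfg' := fderiv_comp_fderiv_of_eventually_leftInverse (by rwa [hx]) hg hfg
  rw [hx] at hfg'
  exact ContinuousLinearMap.inverse_equiv <| ContinuousLinearEquiv.equivOfInverse' _ _ hfg'
    (fderiv_comp_fderiv_of_eventually_leftInverse hg hf hgf)

variable {s : Set E} {t : Set F}

theorem fderiv_apply_fderiv_of_leftInvOn (hs : IsOpen s) (ht : IsOpen t)
    (hf : DifferentiableOn 𝕜 f s) (hg : DifferentiableOn 𝕜 g t) (hst : MapsTo f s t)
    (hinv : LeftInvOn g f s) (hx : x ∈ s) (v : E) : fderiv 𝕜 g (f x) (fderiv 𝕜 f x v) = v := by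
  have hgf : g ∘ f =ᶠ[𝓝 x] id := eventually_of_mem (hs.mem_nhds hx) fun _ hy ↦ hinv hy
  simpa using congr($(fderiv_comp_fderiv_of_eventually_leftInverse
    ((hg _ (hst hx)).differentiableAt (ht.mem_nhds (hst hx)))
    ((hf x hx).differentiableAt (hs.mem_nhds hx)) hgf) v)

theorem VectorField.pullback_eq_fderiv_of_invOn (hs : IsOpen s) (ht : IsOpen t)
    (hf : DifferentiableOn 𝕜 f s) (hg : DifferentiableOn 𝕜 g t) (hst : MapsTo f s t)
    (hinv : InvOn g f s t) (hx : x ∈ s) (V : F → F) :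
    pullback 𝕜 f V x = fderiv 𝕜 g (f x) (V (f x)) := by
  have hfx : f x ∈ t := hst hx
  rw [pullback, inverse_fderiv_eq_fderiv_of_localInverse
    ((hf x hx).differentiableAt (hs.mem_nhds hx)) ((hg _ hfx).differentiableAt (ht.mem_nhds hfx))
    (eventually_of_mem (hs.mem_nhds hx) fun _ hy ↦ hinv.1 hy)
    (eventually_of_mem (ht.mem_nhds hfx) fun _ hu ↦ hinv.2 hu)]

end LocalInverse

theorem VectorField.lieBracket_smul_id_left {𝕜 E : Type*} [NontriviallyNormedField 𝕜]
    [NormedAddCommGroup E] [NormedSpace 𝕜 E] {f : E → 𝕜} {W : E → E} {u : E}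
    (hf : DifferentiableAt 𝕜 f u) (hW : lieBracket 𝕜 id W u = 0) :
    lieBracket 𝕜 (fun v ↦ f v • v) W u = -(fderiv 𝕜 f u (W u)) • u := by
  simpa [hW] using lieBracket_smul_left (V := id) (W := W) hf differentiableAt_id

theorem stmt_0_general (n : ℕ) (Ω U : Set (Fin n → ℝ)) (hΩ : IsOpen Ω) (hU : IsOpen U)
    -- `Φ : Ω → U` is a `C²` diffeomorphism with inverse `Ψ`
    (Φ Ψ : (Fin n → ℝ) → (Fin n → ℝ))
    (hΦ : ContDiffOn ℝ 2 Φ Ω) (hΨ : ContDiffOn ℝ 2 Ψ U)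
    (hΦU : Φ '' Ω = U)
    (hinv₁ : ∀ x ∈ Ω, Ψ (Φ x) = x) (hinv₂ : ∀ u ∈ U, Φ (Ψ u) = u)
    (X : (Fin n → ℝ) → (Fin n → ℝ))
    -- `h` is a `C¹` function vanishing nowhere on `U`
    (h : (Fin n → ℝ) → ℝ) (hh : ContDiffOn ℝ 1 h U) (hh0 : ∀ u ∈ U, h u ≠ 0)
    -- the pushforward of `X` by `Φ` equals `h • E`
    (hpush : ∀ x ∈ Ω, fderiv ℝ Φ x (X x) = h (Φ x) • Φ x)
    -- `Ȳ` is a `C¹` vector field on `U` with `[E, Ȳ] = 0`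
    (Ybar : (Fin n → ℝ) → (Fin n → ℝ)) (hYbar : ContDiffOn ℝ 1 Ybar U)
    (hE : ∀ u ∈ U, lieBracket n (eulerVF n) Ybar u = 0)
    -- the pullback `Y(x) = (DΦ(x))⁻¹ · Ȳ(Φ(x)) = DΨ(Φ(x)) · Ȳ(Φ(x))`
    (Y : (Fin n → ℝ) → (Fin n → ℝ))
    (hY : ∀ x ∈ Ω, Y x = fderiv ℝ Ψ (Φ x) (Ybar (Φ x)))
    -- the scalar function `μ(x) = −(∇h(Φ(x))·Ȳ(Φ(x))) / h(Φ(x))`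
    (μ : (Fin n → ℝ) → ℝ)
    (hμ : ∀ x ∈ Ω, μ x = -(fderiv ℝ h (Φ x) (Ybar (Φ x))) / h (Φ x)) :
    -- then `Y` is a Lie symmetry of `X`: `[X, Y] = μ • X` on `Ω`
    ∀ x ∈ Ω, lieBracket n X Y x = μ x • X x := by
  intro x hx
  have hΦΩ : MapsTo Φ Ω U := hΦU ▸ mapsTo_image Φ Ω
  have hΦd := hΦ.differentiableOn two_ne_zero
  have hΨd := hΨ.differentiableOn two_ne_zero
  have hpullback : ∀ V, ∀ y ∈ Ω, VectorField.pullback ℝ Φ V y = fderiv ℝ Ψ (Φ y) (V (Φ y)) :=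
    fun V y hy ↦ VectorField.pullback_eq_fderiv_of_invOn hΩ hU hΦd hΨd hΦΩ
      ⟨fun y hy ↦ hinv₁ y hy, fun u hu ↦ hinv₂ u hu⟩ hy V
  have hXΨ : ∀ y ∈ Ω, X y = fderiv ℝ Ψ (Φ y) (h (Φ y) • Φ y) := fun y hy ↦ by
    rw [← hpush y hy, fderiv_apply_fderiv_of_leftInvOn hΩ hU hΦd hΨd hΦΩ
      (fun y hy ↦ hinv₁ y hy) hy]
  have hX_eq : X =ᶠ[𝓝 x] VectorField.pullback ℝ Φ (fun u ↦ h u • u) :=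
    eventually_of_mem (hΩ.mem_nhds hx) fun y hy ↦ (hXΨ y hy).trans (hpullback _ y hy).symm
  have hY_eq : Y =ᶠ[𝓝 x] VectorField.pullback ℝ Φ Ybar :=
    eventually_of_mem (hΩ.mem_nhds hx) fun y hy ↦ (hY y hy).trans (hpullback _ y hy).symm
  have hu : Φ x ∈ U := hΦΩ hx
  have hhd := (hh.contDiffAt (hU.mem_nhds hu)).differentiableAt one_ne_zero
  have hYbard := (hYbar.contDiffAt (hU.mem_nhds hu)).differentiableAt one_ne_zero
  calc lieBracket n X Y x
      = VectorField.lieBracket ℝ (VectorField.pullback ℝ Φ (fun u ↦ h u • u))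
          (VectorField.pullback ℝ Φ Ybar) x := hX_eq.lieBracket_vectorField_eq hY_eq
    _ = VectorField.pullback ℝ Φ (VectorField.lieBracket ℝ (fun u ↦ h u • u) Ybar) x :=
        (VectorField.pullback_lieBracket (by simp) (hΦ.contDiffAt (hΩ.mem_nhds hx))
          (hhd.smul differentiableAt_id) hYbard).symm
    _ = μ x • X x := by
        rw [hpullback _ x hx, VectorField.lieBracket_smul_id_left hhd (hE _ hu), hXΨ x hx,
          hμ x hx, map_smul, map_smul, smul_smul, div_mul_cancel₀ _ (hh0 _ hu)]

theorem stmt_0 (n : ℕ) (Ω U : Set (Fin n → ℝ)) (hΩ : IsOpen Ω) (hU : IsOpen U)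
    -- `Φ : Ω → U` is a `C²` diffeomorphism with inverse `Ψ`
    (Φ Ψ : (Fin n → ℝ) → (Fin n → ℝ))
    (hΦ : ContDiffOn ℝ 2 Φ Ω) (hΨ : ContDiffOn ℝ 2 Ψ U)
    (hΦU : Φ '' Ω = U) (hΨΩ : Set.MapsTo Ψ U Ω)
    (hinv₁ : ∀ x ∈ Ω, Ψ (Φ x) = x) (hinv₂ : ∀ u ∈ U, Φ (Ψ u) = u)
    -- `X` is a `C¹` vector field on `Ω`
    (X : (Fin n → ℝ) → (Fin n → ℝ)) (hX : ContDiffOn ℝ 1 X Ω)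
    -- `h` is a `C¹` function vanishing nowhere on `U`
    (h : (Fin n → ℝ) → ℝ) (hh : ContDiffOn ℝ 1 h U) (hh0 : ∀ u ∈ U, h u ≠ 0)
    -- the pushforward of `X` by `Φ` equals `h • E`
    (hpush : ∀ x ∈ Ω, fderiv ℝ Φ x (X x) = h (Φ x) • Φ x)
    -- `Ȳ` is a `C¹` vector field on `U` with `[E, Ȳ] = 0`
    (Ybar : (Fin n → ℝ) → (Fin n → ℝ)) (hYbar : ContDiffOn ℝ 1 Ybar U)
    (hE : ∀ u ∈ U, lieBracket n (eulerVF n) Ybar u = 0)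
    -- the pullback `Y(x) = (DΦ(x))⁻¹ · Ȳ(Φ(x)) = DΨ(Φ(x)) · Ȳ(Φ(x))`
    (Y : (Fin n → ℝ) → (Fin n → ℝ))
    (hY : ∀ x ∈ Ω, Y x = fderiv ℝ Ψ (Φ x) (Ybar (Φ x)))
    -- the scalar function `μ(x) = −(∇h(Φ(x))·Ȳ(Φ(x))) / h(Φ(x))`
    (μ : (Fin n → ℝ) → ℝ)
    (hμ : ∀ x ∈ Ω, μ x = -(fderiv ℝ h (Φ x) (Ybar (Φ x))) / h (Φ x)) :
    -- then `Y` is a Lie symmetry of `X`: `[X, Y] = μ • X` on `Ω`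
    ∀ x ∈ Ω, lieBracket n X Y x = μ x • X x :=
  stmt_0_general n Ω U hΩ hU Φ Ψ hΦ hΨ hΦU hinv₁ hinv₂ X h hh hh0 hpush Ybar hYbar hE Y hY μ hμ
end

section
/- Let n ≥ 3, let Ω ⊆ ℝⁿ be open, let C₁,…,C_{n−2}, H : Ω → ℝ be C² functions, let ν : Ω → ℝ be a nowhere-vanishing C¹ function, and let X = ν·V where V is the Nambu vector field associated to C₁,…,C_{n−2}, H. Define Φ : Ω → ℝⁿ by Φ = (1/ν, C₁/ν, C₂/ν, …, C_{n−2}/ν, H/ν). Then for every x ∈ Ω, DΦ(x)·X(x) = −div X(x)·Φ(x). (In particular, after the time reparametrization ds = −div X dt, the transformed system becomes the linear system u′ᵢ = uᵢ, i = 1,…,n.) -/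
/-- Jacobian determinant `∂(f₁,…,fₙ)/∂(x₁,…,xₙ)(x)` of a family of `n` scalar
functions on `ℝⁿ`: the determinant of the matrix with `(i,j)` entry `∂fᵢ/∂xⱼ(x)`. -/
noncomputable def jacDet (n : ℕ) (f : Fin n → (Fin n → ℝ) → ℝ) (x : Fin n → ℝ) : ℝ :=
  (Matrix.of fun i j => fderiv ℝ (f i) x (Pi.single j 1)).det

/-- The Nambu vector field associated to `C₁,…,C_{n−2}, H`:
`Vᵢ(x) = ∂(C₁,…,C_{n−2}, πᵢ, H)/∂(x₁,…,xₙ)(x)`. -/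
noncomputable def nambuVF (n : ℕ) (C : Fin (n - 2) → (Fin n → ℝ) → ℝ)
    (H : (Fin n → ℝ) → ℝ) (x : Fin n → ℝ) (i : Fin n) : ℝ :=
  jacDet n (fun k => if hk : (k : ℕ) < n - 2 then C ⟨k, hk⟩
    else if (k : ℕ) = n - 2 then (fun y => y i) else H) x

/-- The divergence of a vector field: `div X(x) = trace (DX(x))`. -/
noncomputable def divergence (n : ℕ) (X : (Fin n → ℝ) → (Fin n → ℝ))
    (x : Fin n → ℝ) : ℝ :=
  LinearMap.trace ℝ (Fin n → ℝ) (fderiv ℝ X x).toLinearMap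

/-- The map `Φ = (1/ν, C₁/ν, …, C_{n−2}/ν, H/ν) : ℝⁿ → ℝⁿ`. -/
noncomputable def phiMap (n : ℕ) (C : Fin (n - 2) → (Fin n → ℝ) → ℝ)
    (H ν : (Fin n → ℝ) → ℝ) (x : Fin n → ℝ) (k : Fin n) : ℝ :=
  (if (k : ℕ) = 0 then 1
    else if hk : (k : ℕ) - 1 < n - 2 then C ⟨(k : ℕ) - 1, hk⟩ x else H x) / ν x

/-! Write `p = n - 2` for the slot of the coordinate function and `J` for the Jacobian matrix
of `(C₁, …, C_{n-2}, H, H)`. Replacing row `p` of `J` by `eᵢ` shows `Vᵢ = adj(J)ᵢₚ`, so by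
cofactor expansion along row `p` the derivative `Dg · V` is the determinant of `J` with row `p`
replaced by `∇g`. This vanishes for `g = Cⱼ, H`, hence the numerators of `Φ` are first integrals
of `V`. Moreover `div V = 0` (Piola's identity): differentiating `det` row by row pairs the
symmetric Hessian of each row function against a determinant antisymmetric in the two rows it
touches. Thus `div (ν V) = Dν · V`, and the quotient rule gives
`D(g/ν) · (ν V) = -(Dν · V) (g/ν)` for every first integral `g`. -/

open Function Matrix

namespace Matrix

variable {ι R : Type*} [Fintype ι] [DecidableEq ι] [CommRing R]

theorem det_updateRow_updateRow_comm (A : Matrix ι ι R) {p k : ι} (hpk : p ≠ k) (u v : ι → R) :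
    ((A.updateRow p u).updateRow k v).det = -((A.updateRow p v).updateRow k u).det := by
  have hswap : ((A.updateRow p u).updateRow k v).submatrix (Equiv.swap p k) id
      = (A.updateRow p v).updateRow k u := by
    ext r j
    rcases eq_or_ne r p with rfl | hrp
    · simp [updateRow_apply, hpk]
    rcases eq_or_ne r k with rfl | hrk
    · simp [updateRow_apply, hpk]
    · simp [updateRow_apply, hrp, hrk, Equiv.swap_apply_of_ne_of_ne hrp hrk]
  rw [← hswap, det_permute, Equiv.Perm.sign_swap hpk]
  simp

theorem det_updateRow_eq_sum_mul_adjugate (A : Matrix ι ι R) (p : ι) (w : ι → R) :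
    (A.updateRow p w).det = ∑ i, w i * adjugate A i p := by
  rw [det_eq_sum_mul_adjugate_row _ p]
  simp [adjugate_apply]

variable (ι R) in
noncomputable def detContinuousMultilinear [TopologicalSpace R] [IsTopologicalRing R] :
    ContinuousMultilinearMap R (fun _ : ι => ι → R) R :=
  { (detRowAlternating : (ι → R) [⋀^ι]→ₗ[R] R).toMultilinearMap with
    cont := continuous_id.matrix_det }

theorem detContinuousMultilinear_apply [TopologicalSpace R] [IsTopologicalRing R]
    (A : Matrix ι ι R) :
    detContinuousMultilinear ι R A = A.det :=
  rfl

end Matrix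

theorem Finset.sum_sum_mul_eq_zero_of_symm_of_antisymm {ι R : Type*} [Fintype ι] [CommRing R]
    [NoZeroDivisors R] [CharZero R] {s a : ι → ι → R} (hs : ∀ i j, s i j = s j i)
    (ha : ∀ i j, a i j = -a j i) : ∑ i, ∑ j, s i j * a i j = 0 := by
  refine self_eq_neg.mp ?_
  conv_lhs => rw [Finset.sum_comm]
  rw [← Finset.sum_neg_distrib]
  refine Finset.sum_congr rfl fun i _ => ?_
  rw [← Finset.sum_neg_distrib]
  refine Finset.sum_congr rfl fun j _ => ?_
  rw [hs j i, ha j i, mul_neg]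

section Jacobian

variable {n : ℕ}

noncomputable def partials (g : (Fin n → ℝ) → ℝ) (x : Fin n → ℝ) : Fin n → ℝ :=
  fun j => fderiv ℝ g x (Pi.single j 1)

noncomputable def jacMatrix (f : Fin n → (Fin n → ℝ) → ℝ) (x : Fin n → ℝ) :
    Matrix (Fin n) (Fin n) ℝ :=
  of fun k => partials (f k) x

theorem jacDet_eq_det_jacMatrix (f : Fin n → (Fin n → ℝ) → ℝ) (x : Fin n → ℝ) :
    jacDet n f x = (jacMatrix f x).det :=
  rfl

theorem partials_coord (i : Fin n) (x : Fin n → ℝ) :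
    partials (fun y => y i) x = Pi.single i 1 := by
  have hproj : fderiv ℝ (fun y : Fin n → ℝ => y i) x = ContinuousLinearMap.proj i :=
    (ContinuousLinearMap.proj (R := ℝ) (φ := fun _ : Fin n => ℝ) i).fderiv
  ext j
  simp [partials, hproj, Pi.single_apply, eq_comm]

theorem fderiv_apply_eq_sum_partials (g : (Fin n → ℝ) → ℝ) (x v : Fin n → ℝ) :
    fderiv ℝ g x v = ∑ i, v i * partials g x i := by
  conv_lhs => rw [← Finset.univ_sum_single v, map_sum]
  refine Finset.sum_congr rfl fun i _ => ?_
  rw [partials, ← smul_eq_mul, ← map_smul, ← Pi.single_smul', smul_eq_mul, mul_one]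

theorem jacMatrix_update (f : Fin n → (Fin n → ℝ) → ℝ) (p : Fin n) (g : (Fin n → ℝ) → ℝ)
    (x : Fin n → ℝ) :
    jacMatrix (update f p g) x = (jacMatrix f x).updateRow p (partials g x) := by
  ext k j
  rcases eq_or_ne k p with rfl | hkp <;> simp [jacMatrix, updateRow_apply, *]


theorem jacDet_update_coord (f : Fin n → (Fin n → ℝ) → ℝ) (p i : Fin n) (x : Fin n → ℝ) :
    jacDet n (update f p fun y => y i) x = adjugate (jacMatrix f x) i p := by
  rw [jacDet_eq_det_jacMatrix, jacMatrix_update, partials_coord, adjugate_apply]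

theorem fderiv_apply_adjugate_col (f : Fin n → (Fin n → ℝ) → ℝ) (p : Fin n)
    (g : (Fin n → ℝ) → ℝ) (x : Fin n → ℝ) :
    fderiv ℝ g x (fun i => adjugate (jacMatrix f x) i p) = jacDet n (update f p g) x := by
  rw [fderiv_apply_eq_sum_partials, jacDet_eq_det_jacMatrix, jacMatrix_update,
    det_updateRow_eq_sum_mul_adjugate]
  simp only [mul_comm]

theorem fderiv_apply_adjugate_col_of_ne (f : Fin n → (Fin n → ℝ) → ℝ) {p k : Fin n}
    (hkp : k ≠ p) (x : Fin n → ℝ) :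
    fderiv ℝ (f k) x (fun i => adjugate (jacMatrix f x) i p) = 0 := by
  rw [fderiv_apply_adjugate_col, jacDet_eq_det_jacMatrix, jacMatrix_update]
  exact det_updateRow_eq_zero hkp

noncomputable def partialsCLM : ((Fin n → ℝ) →L[ℝ] ℝ) →L[ℝ] (Fin n → ℝ) :=
  ContinuousLinearMap.pi fun j => ContinuousLinearMap.apply ℝ ℝ (Pi.single j 1)

theorem hasFDerivAt_partials {g : (Fin n → ℝ) → ℝ} {x : Fin n → ℝ} (hg : ContDiffAt ℝ 2 g x) :
    HasFDerivAt (partials g) (partialsCLM ∘L fderiv ℝ (fderiv ℝ g) x) x := by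
  have hdiff : DifferentiableAt ℝ (fderiv ℝ g) x :=
    (hg.fderiv_right (m := 1) (by norm_num)).differentiableAt one_ne_zero
  exact partialsCLM.hasFDerivAt.comp x hdiff.hasFDerivAt

theorem hasFDerivAt_updateRow_jacMatrix {f : Fin n → (Fin n → ℝ) → ℝ} {x : Fin n → ℝ}
    (hf : ∀ k, ContDiffAt ℝ 2 (f k) x) (p : Fin n) (c : Fin n → ℝ) (k : Fin n) :
    HasFDerivAt (fun y => (jacMatrix f y).updateRow p c k)
      (if k = p then 0 else partialsCLM ∘L fderiv ℝ (fderiv ℝ (f k)) x) x := by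
  rcases eq_or_ne k p with rfl | hkp
  · simpa using hasFDerivAt_const (𝕜 := ℝ) c x
  · simp only [updateRow_ne hkp, if_neg hkp]
    exact hasFDerivAt_partials (hf k)

theorem hasFDerivAt_adjugate_col {f : Fin n → (Fin n → ℝ) → ℝ} {x : Fin n → ℝ}
    (hf : ∀ k, ContDiffAt ℝ 2 (f k) x) (p i : Fin n) :
    HasFDerivAt (fun y => adjugate (jacMatrix f y) i p)
      (∑ k, (detContinuousMultilinear (Fin n) ℝ).toContinuousLinearMap
          (fun k => (jacMatrix f x).updateRow p (Pi.single i 1) k) k ∘L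
        if k = p then 0 else partialsCLM ∘L fderiv ℝ (fderiv ℝ (f k)) x) x := by
  simp only [adjugate_apply]
  exact HasFDerivAt.multilinear_comp (f := detContinuousMultilinear (Fin n) ℝ)
    (hasFDerivAt_updateRow_jacMatrix hf p _)

theorem fderiv_adjugate_col_apply {f : Fin n → (Fin n → ℝ) → ℝ} {x : Fin n → ℝ}
    (hf : ∀ k, ContDiffAt ℝ 2 (f k) x) (p i : Fin n) (v : Fin n → ℝ) :
    fderiv ℝ (fun y => adjugate (jacMatrix f y) i p) x v
      = ∑ k, if k = p then 0 else (((jacMatrix f x).updateRow p (Pi.single i 1)).updateRow k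
          fun j => fderiv ℝ (fderiv ℝ (f k)) x v (Pi.single j 1)).det := by
  rw [(hasFDerivAt_adjugate_col hf p i).fderiv]
  refine (_root_.sum_apply _ _ _).trans (Finset.sum_congr rfl fun k _ => ?_)
  split_ifs with hkp
  · subst hkp
    simp only [ContinuousLinearMap.comp_zero, _root_.zero_apply]
  · simp only [ContinuousLinearMap.comp_apply,
      ContinuousMultilinearMap.toContinuousLinearMap_apply]
    rfl

theorem sum_fderiv_adjugate_col_eq_zero {f : Fin n → (Fin n → ℝ) → ℝ} {x : Fin n → ℝ}
    (hf : ∀ k, ContDiffAt ℝ 2 (f k) x) (p : Fin n) :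
    ∑ i, fderiv ℝ (fun y => adjugate (jacMatrix f y) i p) x (Pi.single i 1) = 0 := by
  simp only [fderiv_adjugate_col_apply hf]
  rw [Finset.sum_comm]
  refine Finset.sum_eq_zero fun k _ => ?_
  rcases eq_or_ne k p with rfl | hkp
  · simp
  simp only [if_neg hkp, det_updateRow_eq_sum_mul_adjugate]
  refine Finset.sum_sum_mul_eq_zero_of_symm_of_antisymm
    (fun i j => (hf k).isSymmSndFDerivAt (by simp) _ _) fun i j => ?_
  rw [adjugate_apply, adjugate_apply]
  exact det_updateRow_updateRow_comm _ (Ne.symm hkp) _ _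

end Jacobian

section Divergence

variable {n : ℕ}

theorem divergence_eq_sum_fderiv {W : (Fin n → ℝ) → Fin n → ℝ} {x : Fin n → ℝ}
    (hW : DifferentiableAt ℝ W x) :
    divergence n W x = ∑ i, fderiv ℝ (fun y => W y i) x (Pi.single i 1) := by
  rw [divergence, LinearMap.trace_eq_matrix_trace ℝ (Pi.basisFun ℝ (Fin n))]
  simp [Matrix.trace, fderiv_apply hW]

theorem divergence_smul {ν : (Fin n → ℝ) → ℝ} {W : (Fin n → ℝ) → Fin n → ℝ} {x : Fin n → ℝ}
    (hν : DifferentiableAt ℝ ν x) (hW : DifferentiableAt ℝ W x) :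
    divergence n (fun y => ν y • W y) x = fderiv ℝ ν x (W x) + ν x * divergence n W x := by
  have hWi : ∀ i, DifferentiableAt ℝ (fun y => W y i) x := differentiableAt_pi.mp hW
  rw [divergence_eq_sum_fderiv (hν.fun_smul hW), divergence_eq_sum_fderiv hW,
    fderiv_apply_eq_sum_partials, Finset.mul_sum, ← Finset.sum_add_distrib]
  refine Finset.sum_congr rfl fun i _ => ?_
  simp only [Pi.smul_apply, smul_eq_mul, fderiv_fun_mul hν (hWi i)]
  simp only [_root_.add_apply, _root_.smul_apply, smul_eq_mul, partials]
  ring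

end Divergence

theorem fderiv_div_apply_smul_of_fderiv_apply_eq_zero {𝕜 E : Type*} [NontriviallyNormedField 𝕜]
    [NormedAddCommGroup E] [NormedSpace 𝕜 E] {g ν : E → 𝕜} {x v : E}
    (hg : DifferentiableAt 𝕜 g x) (hν : DifferentiableAt 𝕜 ν x) (hν0 : ν x ≠ 0)
    (hgv : fderiv 𝕜 g x v = 0) :
    fderiv 𝕜 (fun y => g y / ν y) x (ν x • v) = -fderiv 𝕜 ν x v * (g x / ν x) := by
  have hquot : HasFDerivAt (fun y => g y / ν y)
      (g x • (ContinuousLinearMap.toSpanSingleton 𝕜 (-(ν x ^ 2)⁻¹) ∘L fderiv 𝕜 ν x)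
        + (ν x)⁻¹ • fderiv 𝕜 g x) x := by
    simp only [div_eq_mul_inv]
    exact hg.hasFDerivAt.fun_mul ((hasFDerivAt_inv hν0).comp x hν.hasFDerivAt)
  simp only [hquot.fderiv, map_smul, _root_.add_apply, _root_.smul_apply,
    ContinuousLinearMap.comp_apply, ContinuousLinearMap.toSpanSingleton_apply, smul_eq_mul, hgv,
    mul_zero, add_zero]
  field_simp

section NambuSystem

variable {n : ℕ} (C : Fin (n - 2) → (Fin n → ℝ) → ℝ) (H : (Fin n → ℝ) → ℝ)

noncomputable def nambuRows : Fin n → (Fin n → ℝ) → ℝ :=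
  fun k => if hk : (k : ℕ) < n - 2 then C ⟨k, hk⟩ else H

noncomputable def phiNumerators : Fin n → (Fin n → ℝ) → ℝ :=
  fun k => if (k : ℕ) = 0 then fun _ => 1
    else if hk : (k : ℕ) - 1 < n - 2 then C ⟨(k : ℕ) - 1, hk⟩ else H

theorem nambuVF_eq_adjugate (hn : 0 < n) (x : Fin n → ℝ) :
    nambuVF n C H x = fun i => adjugate (jacMatrix (nambuRows C H) x) i ⟨n - 2, by omega⟩ := by
  funext i
  rw [← jacDet_update_coord]
  show jacDet n _ x = _
  congr 1
  funext k
  rcases eq_or_ne k ⟨n - 2, by omega⟩ with rfl | hk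
  · simp
  · have hk' : (k : ℕ) ≠ n - 2 := Fin.val_ne_of_ne hk
    simp [hk, hk', nambuRows]

theorem fderiv_nambuRows_apply_nambuVF (hn : 0 < n) {k : Fin n} (hk : (k : ℕ) ≠ n - 2)
    (x : Fin n → ℝ) :
    fderiv ℝ (nambuRows C H k) x (nambuVF n C H x) = 0 := by
  rw [nambuVF_eq_adjugate C H hn]
  exact fderiv_apply_adjugate_col_of_ne _ (Fin.ne_of_val_ne hk) x

theorem fderiv_phiNumerators_apply_nambuVF (hn : 0 < n) (k : Fin n) (x : Fin n → ℝ) :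
    fderiv ℝ (phiNumerators C H k) x (nambuVF n C H x) = 0 := by
  by_cases h0 : (k : ℕ) = 0
  · simp [phiNumerators, h0]
  obtain ⟨k', hk', hrow⟩ :
      ∃ k' : Fin n, (k' : ℕ) ≠ n - 2 ∧ phiNumerators C H k = nambuRows C H k' := by
    by_cases hC : (k : ℕ) - 1 < n - 2
    · exact ⟨⟨k - 1, by omega⟩, by simp only; omega, by simp [phiNumerators, nambuRows, h0, hC]⟩
    · have hk : ¬(k : ℕ) < n - 2 := by omega
      exact ⟨k, by omega, by simp [phiNumerators, nambuRows, h0, hC, hk]⟩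
  rw [hrow]
  exact fderiv_nambuRows_apply_nambuVF C H hn hk' x

theorem phiMap_eq_div (ν : (Fin n → ℝ) → ℝ) :
    phiMap n C H ν = fun y k => phiNumerators C H k y / ν y := by
  ext y k
  unfold phiMap phiNumerators
  split_ifs <;> rfl

variable {C H} {x : Fin n → ℝ}

theorem contDiffAt_nambuRows (hC : ∀ j, ContDiffAt ℝ 2 (C j) x) (hH : ContDiffAt ℝ 2 H x)
    (k : Fin n) : ContDiffAt ℝ 2 (nambuRows C H k) x := by
  unfold nambuRows
  split_ifs
  exacts [hC _, hH]

theorem contDiffAt_phiNumerators (hC : ∀ j, ContDiffAt ℝ 2 (C j) x) (hH : ContDiffAt ℝ 2 H x)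
    (k : Fin n) : ContDiffAt ℝ 2 (phiNumerators C H k) x := by
  unfold phiNumerators
  split_ifs
  exacts [contDiffAt_const, hC _, hH]

theorem differentiableAt_nambuVF (hn : 0 < n) (hC : ∀ j, ContDiffAt ℝ 2 (C j) x)
    (hH : ContDiffAt ℝ 2 H x) : DifferentiableAt ℝ (nambuVF n C H) x := by
  simp only [funext (nambuVF_eq_adjugate C H hn)]
  exact differentiableAt_pi.mpr fun i =>
    (hasFDerivAt_adjugate_col (contDiffAt_nambuRows hC hH) _ i).differentiableAt

theorem divergence_nambuVF (hn : 0 < n) (hC : ∀ j, ContDiffAt ℝ 2 (C j) x)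
    (hH : ContDiffAt ℝ 2 H x) : divergence n (nambuVF n C H) x = 0 := by
  rw [divergence_eq_sum_fderiv (differentiableAt_nambuVF hn hC hH)]
  simp only [nambuVF_eq_adjugate C H hn]
  exact sum_fderiv_adjugate_col_eq_zero (contDiffAt_nambuRows hC hH) _

end NambuSystem

theorem stmt_3 (n : ℕ) (hn : 3 ≤ n) (Ω : Set (Fin n → ℝ)) (hΩ : IsOpen Ω)
    (C : Fin (n - 2) → (Fin n → ℝ) → ℝ) (H : (Fin n → ℝ) → ℝ)
    (hC : ∀ j, ContDiffOn ℝ 2 (C j) Ω) (hH : ContDiffOn ℝ 2 H Ω)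
    (ν : (Fin n → ℝ) → ℝ) (hν : ContDiffOn ℝ 1 ν Ω) (hν0 : ∀ x ∈ Ω, ν x ≠ 0)
    -- `X = ν · V`, the rescaled Nambu vector field
    (X : (Fin n → ℝ) → (Fin n → ℝ)) (hX : ∀ x, X x = ν x • nambuVF n C H x) :
    ∀ x ∈ Ω, fderiv ℝ (phiMap n C H ν) x (X x)
      = (-(divergence n X x)) • phiMap n C H ν x := by
  intro x hx
  have hn0 : 0 < n := by omega
  have hCx : ∀ j, ContDiffAt ℝ 2 (C j) x := fun j => (hC j).contDiffAt (hΩ.mem_nhds hx)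
  have hHx : ContDiffAt ℝ 2 H x := hH.contDiffAt (hΩ.mem_nhds hx)
  have hνx : DifferentiableAt ℝ ν x :=
    ((hν.contDiffAt (hΩ.mem_nhds hx)).differentiableAt one_ne_zero)
  have hgx : ∀ k, DifferentiableAt ℝ (phiNumerators C H k) x := fun k =>
    (contDiffAt_phiNumerators hCx hHx k).differentiableAt two_ne_zero
  have hdiv : divergence n X x = fderiv ℝ ν x (nambuVF n C H x) := by
    rw [funext hX, divergence_smul hνx (differentiableAt_nambuVF hn0 hCx hHx),
      divergence_nambuVF hn0 hCx hHx, mul_zero, add_zero]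
  have hquot : ∀ k, DifferentiableAt ℝ (fun y => phiNumerators C H k y / ν y) x := fun k => by
    simp only [div_eq_mul_inv]
    exact (hgx k).fun_mul (hνx.inv (hν0 x hx))
  rw [hdiv, hX, phiMap_eq_div, fderiv_pi hquot]
  ext k
  simp only [ContinuousLinearMap.pi_apply, Pi.smul_apply, smul_eq_mul]
  exact fderiv_div_apply_smul_of_fderiv_apply_eq_zero (hgx k) hνx (hν0 x hx)
    (fderiv_phiNumerators_apply_nambuVF C H hn0 k x)
end

section
/- Let n ≥ 3, let Ω ⊆ ℝⁿ be open, and let C₁,…,C_{n−2}, H : Ω → ℝ be C² functions. Then the associated Nambu vector field V is divergence-free on Ω: div V(x) = Σᵢ ∂Vᵢ/∂xᵢ(x) = 0 for all x ∈ Ω. -/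
/-! With `g = (C₁, …, C_{n−2}, ·, H)` and `p` the index of the coordinate row, `Vᵢ` is the
`(i, p)` entry of the adjugate of the Jacobian matrix of `g`, so the theorem is the Piola identity:
the columns of the adjugate of a Jacobian matrix are divergence free. Expanding the determinant
over permutations `σ` and differentiating, every term of the divergence contains a second
derivative `∂_{σ p} ∂_{σ m} g_m` with `m ≠ p`; replacing `σ` by `σ ∘ (p m)` changes the sign of
the permutation but, by the symmetry of second derivatives, nothing else, so the terms cancel in
pairs. -/
open Finset Matrix Equiv

noncomputable def jacobianMatrix (n : ℕ) (f : Fin n → (Fin n → ℝ) → ℝ) (x : Fin n → ℝ) :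
    Matrix (Fin n) (Fin n) ℝ :=
  of fun i j => fderiv ℝ (f i) x (Pi.single j 1)

section Permutations

variable {α R : Type*} [Fintype α] [DecidableEq α] [CommRing R]

theorem Equiv.Perm.sum_eq_zero_of_mul_swap {M : Type*} [AddCommGroup M] {a b : α} (hab : a ≠ b)
    {F : Perm α → M} (hF : ∀ σ, F (σ * Equiv.swap a b) = -F σ) : ∑ σ, F σ = 0 :=
  sum_involution (fun σ _ => σ * Equiv.swap a b) (fun σ _ => by simp [hF])
    (fun σ _ _ => by simpa [swap_eq_one_iff] using hab) (fun _ _ => mem_univ _)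
    (fun σ _ => by simp [mul_assoc])

theorem Matrix.det_updateRow_single (M : Matrix α α R) (p i : α) :
    (M.updateRow p (Pi.single i 1)).det =
      ∑ σ : Perm α with σ p = i, ((Perm.sign σ : ℤ) : R) * ∏ j ∈ univ.erase p, M j (σ j) := by
  rw [← det_transpose, det_apply', sum_filter]
  refine sum_congr rfl fun σ _ => ?_
  rw [← mul_prod_erase univ _ (mem_univ p)]
  have hrow : ∀ j ∈ univ.erase p, (M.updateRow p (Pi.single i 1))ᵀ (σ j) j = M j (σ j) :=
    fun j hj => by simp [updateRow_ne (ne_of_mem_erase hj)]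
  rw [prod_congr rfl hrow]
  by_cases h : σ p = i <;> simp [h]

theorem Matrix.sum_sign_mul_prod_mul_eq_zero_of_isSymm (M B : Matrix α α R) (hB : B.IsSymm)
    {p m : α} (hpm : p ≠ m) :
    ∑ σ : Perm α, ((Perm.sign σ : ℤ) : R) *
      ((∏ j ∈ (univ.erase p).erase m, M j (σ j)) * B (σ p) (σ m)) = 0 := by
  refine Perm.sum_eq_zero_of_mul_swap hpm fun σ => ?_
  have hprod : ∏ j ∈ (univ.erase p).erase m, M j ((σ * Equiv.swap p m) j) =
      ∏ j ∈ (univ.erase p).erase m, M j (σ j) := by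
    refine prod_congr rfl fun j hj => ?_
    rw [Perm.mul_apply, swap_apply_of_ne_of_ne (ne_of_mem_erase (mem_of_mem_erase hj))
      (ne_of_mem_erase hj)]
  rw [hprod, Perm.sign_mul, Perm.sign_swap hpm, Perm.mul_apply, Perm.mul_apply, swap_apply_left,
    swap_apply_right, ← hB.apply (σ p) (σ m)]
  push_cast
  ring

end Permutations

theorem DifferentiableAt.hasFDerivAt_fderiv_apply {𝕜 E F : Type*} [NontriviallyNormedField 𝕜]
    [NormedAddCommGroup E] [NormedSpace 𝕜 E] [NormedAddCommGroup F] [NormedSpace 𝕜 F]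
    {f : E → F} {x : E} (hf : DifferentiableAt 𝕜 (fderiv 𝕜 f) x) (v : E) :
    HasFDerivAt (fun y => fderiv 𝕜 f y v) ((fderiv 𝕜 (fderiv 𝕜 f) x).flip v) x := by
  simpa using hf.hasFDerivAt.clm_apply (hasFDerivAt_const v x)

section Divergence

variable {n : ℕ} {x : Fin n → ℝ}

theorem divergence_eq_sum_fderiv_apply {X : (Fin n → ℝ) → Fin n → ℝ}
    (hX : ∀ i, DifferentiableAt ℝ (fun y => X y i) x) :
    divergence n X x = ∑ i, fderiv ℝ (fun y => X y i) x (Pi.single i 1) := by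
  rw [divergence, LinearMap.trace_eq_matrix_trace ℝ (Pi.basisFun ℝ (Fin n)), fderiv_pi hX]
  simp [Matrix.trace]

theorem adjugate_jacobianMatrix_apply (g : Fin n → (Fin n → ℝ) → ℝ) (p i : Fin n) :
    (fun y => adjugate (jacobianMatrix n g y) i p) = fun y =>
      ∑ σ : Perm (Fin n) with σ p = i,
        ((Perm.sign σ : ℤ) : ℝ) * ∏ j ∈ univ.erase p, fderiv ℝ (g j) y (Pi.single (σ j) 1) := by
  funext y
  rw [adjugate_apply, det_updateRow_single]
  rfl

theorem divergence_adjugate_jacobianMatrix_eq_zero {g : Fin n → (Fin n → ℝ) → ℝ} {p : Fin n}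
    (hg : ∀ k ≠ p, ContDiffAt ℝ 2 (g k) x) :
    divergence n (fun y i => adjugate (jacobianMatrix n g y) i p) x = 0 := by
  set D2 : Fin n → (Fin n → ℝ) →L[ℝ] (Fin n → ℝ) →L[ℝ] ℝ := fun k => fderiv ℝ (fderiv ℝ (g k)) x
  set P' : Perm (Fin n) → (Fin n → ℝ) →L[ℝ] ℝ := fun σ => ∑ m ∈ univ.erase p,
    (∏ j ∈ (univ.erase p).erase m, fderiv ℝ (g j) x (Pi.single (σ j) 1)) •
      (D2 m).flip (Pi.single (σ m) 1)
  have hP : ∀ σ : Perm (Fin n), HasFDerivAt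
      (fun y => ∏ j ∈ univ.erase p, fderiv ℝ (g j) y (Pi.single (σ j) 1)) (P' σ) x :=
    fun σ => HasFDerivAt.finsetProd fun m hm => DifferentiableAt.hasFDerivAt_fderiv_apply
      (((hg m (ne_of_mem_erase hm)).fderiv_right le_rfl).differentiableAt one_ne_zero) _
  have hV : ∀ i, HasFDerivAt (fun y => adjugate (jacobianMatrix n g y) i p)
      (∑ σ : Perm (Fin n) with σ p = i, ((Perm.sign σ : ℤ) : ℝ) • P' σ) x := by
    intro i
    rw [adjugate_jacobianMatrix_apply]
    exact HasFDerivAt.fun_sum fun σ _ => (hP σ).const_mul _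
  rw [divergence_eq_sum_fderiv_apply fun i => (hV i).differentiableAt]
  calc ∑ i, fderiv ℝ (fun y => adjugate (jacobianMatrix n g y) i p) x (Pi.single i 1)
      = ∑ i, ∑ σ : Perm (Fin n) with σ p = i,
          ((Perm.sign σ : ℤ) : ℝ) * P' σ (Pi.single (σ p) 1) := by
        refine sum_congr rfl fun i _ => ?_
        rw [(hV i).fderiv, _root_.sum_apply]
        exact sum_congr rfl fun σ hσ => by rw [(mem_filter.mp hσ).2]; rfl
    _ = ∑ m ∈ univ.erase p, ∑ σ : Perm (Fin n), ((Perm.sign σ : ℤ) : ℝ) *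
          ((∏ j ∈ (univ.erase p).erase m, fderiv ℝ (g j) x (Pi.single (σ j) 1)) *
            D2 m (Pi.single (σ p) 1) (Pi.single (σ m) 1)) := by
        rw [sum_fiberwise, ← sum_comm]
        refine sum_congr rfl fun σ _ => ?_
        simp only [P', _root_.sum_apply, _root_.smul_apply,
          ContinuousLinearMap.flip_apply, smul_eq_mul, mul_sum]
    _ = 0 := sum_eq_zero fun m hm => by
        have hB : (of fun a b => D2 m (Pi.single a 1) (Pi.single b 1)).IsSymm :=
          IsSymm.ext fun a b => (hg m (ne_of_mem_erase hm)).isSymmSndFDerivAt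
            minSmoothness_of_isRCLikeNormedField.le _ _
        exact sum_sign_mul_prod_mul_eq_zero_of_isSymm (jacobianMatrix n g x) _ hB
          (ne_of_mem_erase hm).symm

end Divergence

theorem nambuVF_eq_adjugate_jacobianMatrix {n : ℕ} (hn : 0 < n)
    (C : Fin (n - 2) → (Fin n → ℝ) → ℝ) (H : (Fin n → ℝ) → ℝ) :
    nambuVF n C H = fun y i => adjugate (jacobianMatrix n
      (fun k => if hk : (k : ℕ) < n - 2 then C ⟨k, hk⟩ else H) y) i ⟨n - 2, by omega⟩ := by
  funext y i
  rw [nambuVF, jacDet, adjugate_apply]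
  congr 1
  ext k j
  by_cases hk : (k : ℕ) = n - 2
  · rw [show k = ⟨n - 2, by omega⟩ from Fin.ext hk]
    simp [(hasFDerivAt_apply i y).fderiv, Pi.single_apply, eq_comm]
  · rw [updateRow_ne fun h => hk (congrArg Fin.val h)]
    by_cases hlt : (k : ℕ) < n - 2 <;> simp [jacobianMatrix, hlt, hk]

theorem stmt_5 (n : ℕ) (hn : 3 ≤ n) (Ω : Set (Fin n → ℝ)) (hΩ : IsOpen Ω)
    (C : Fin (n - 2) → (Fin n → ℝ) → ℝ) (H : (Fin n → ℝ) → ℝ)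
    (hC : ∀ j, ContDiffOn ℝ 2 (C j) Ω) (hH : ContDiffOn ℝ 2 H Ω) :
    ∀ x ∈ Ω, divergence n (nambuVF n C H) x = 0 := by
  intro x hx
  rw [nambuVF_eq_adjugate_jacobianMatrix (by omega)]
  refine divergence_adjugate_jacobianMatrix_eq_zero fun k _ => ?_
  split
  · exact (hC _).contDiffAt (hΩ.mem_nhds hx)
  · exact hH.contDiffAt (hΩ.mem_nhds hx)
end

section
/- Let n ≥ 3, let Ω ⊆ ℝⁿ be open, let X : Ω → ℝⁿ be a vector field, and let C₁,…,C_{n−2}, H : Ω → ℝ be C¹ first integrals of X (i.e. ∇Cⱼ(x)·X(x) = 0 for j = 1,…,n−2 and ∇H(x)·X(x) = 0 for all x ∈ Ω) whose gradients ∇C₁(x),…,∇C_{n−2}(x), ∇H(x) are linearly independent at every point x ∈ Ω. Then the associated Nambu vector field V satisfies V(x) ≠ 0 for all x ∈ Ω, and there exists a unique function ν : Ω → ℝ such that X(x) = ν(x)·V(x) for all x ∈ Ω. -/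
/-- The gradient vector `∇f(x) = (∂f/∂x₁(x), …, ∂f/∂xₙ(x))`. -/
noncomputable def gradVec (n : ℕ) (f : (Fin n → ℝ) → ℝ) (x : Fin n → ℝ) :
    Fin n → ℝ :=
  fun i => fderiv ℝ f x (Pi.single i 1)

/-! At a point `x`, the Nambu field is the generalized cross product of the `n - 1` gradients
`∇C₁, …, ∇C_{n-2}, ∇H`: for every `w`, `w ⬝ V = det (∇C₁, …, ∇C_{n-2}, w, ∇H)`. Hence `V`
is orthogonal to each gradient, and `V ≠ 0` because inserting any `w` outside the span of the
independent gradients gives an invertible matrix. Being a first integral of `X` means that `X` is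
orthogonal to the gradient, so `X` and `V` both lie in the common kernel of `n - 1` independent
linear forms on `ℝⁿ`, which is a line; as `V ≠ 0` it spans that line. -/

open Matrix Module

section CrossVec

variable {K : Type*} [Field K] {m : ℕ}

noncomputable def crossVec (p : Fin (m + 1)) (g : Fin m → Fin (m + 1) → K) : Fin (m + 1) → K :=
  fun i => (of (p.insertNth (Pi.single i 1) g)).det

theorem det_insertNth_eq_dotProduct_crossVec (p : Fin (m + 1)) (w : Fin (m + 1) → K)
    (g : Fin m → Fin (m + 1) → K) :
    (of (p.insertNth w g)).det = w ⬝ᵥ crossVec p g := by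
  set A : Matrix (Fin (m + 1)) (Fin (m + 1)) K := of (p.insertNth w g)
  have hrow : ∀ v, A.updateRow p v = of (p.insertNth v g) := fun v =>
    congrArg of (Fin.update_insertNth (α := fun _ => Fin (m + 1) → K) p w v g)
  rw [det_eq_sum_mul_adjugate_row A p]
  refine Finset.sum_congr rfl fun i _ => ?_
  rw [adjugate_apply, hrow]
  simp [A, crossVec]

theorem dotProduct_crossVec_eq_zero (p : Fin (m + 1)) (g : Fin m → Fin (m + 1) → K)
    (j : Fin m) :
    g j ⬝ᵥ crossVec p g = 0 := by
  rw [← det_insertNth_eq_dotProduct_crossVec]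
  refine det_zero_of_row_eq (p.succAbove_ne j).symm ?_
  funext k
  simp

theorem linearIndependent_insertNth_iff {V : Type*} [AddCommGroup V] [Module K V]
    (p : Fin (m + 1)) (w : V) (g : Fin m → V) :
    LinearIndependent K (p.insertNth w g) ↔
      LinearIndependent K g ∧ w ∉ Submodule.span K (Set.range g) := by
  rw [← Fin.cons_comp_cycleRange, linearIndependent_equiv, linearIndependent_finCons]

theorem exists_notMem_span_of_linearIndependent {g : Fin m → Fin (m + 1) → K}
    (hg : LinearIndependent K g) : ∃ w, w ∉ Submodule.span K (Set.range g) := by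
  refine SetLike.exists_not_mem_of_ne_top _ fun htop => ?_
  have := finrank_span_eq_card hg
  rw [htop, finrank_top, finrank_fin_fun, Fintype.card_fin] at this
  omega

theorem crossVec_ne_zero (p : Fin (m + 1)) {g : Fin m → Fin (m + 1) → K}
    (hg : LinearIndependent K g) : crossVec p g ≠ 0 := by
  obtain ⟨w, hw⟩ := exists_notMem_span_of_linearIndependent hg
  have hunit : IsUnit (of (p.insertNth w g)) :=
    linearIndependent_rows_iff_isUnit.mp ((linearIndependent_insertNth_iff p w g).mpr ⟨hg, hw⟩)
  have hdet := ((isUnit_iff_isUnit_det _).mp hunit).ne_zero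
  rw [det_insertNth_eq_dotProduct_crossVec] at hdet
  exact fun h => hdet (by rw [h, dotProduct_zero])

theorem exists_eq_smul_crossVec (p : Fin (m + 1)) {g : Fin m → Fin (m + 1) → K}
    (hg : LinearIndependent K g) {v : Fin (m + 1) → K} (hv : ∀ j, g j ⬝ᵥ v = 0) :
    ∃ c : K, v = c • crossVec p g := by
  set G : Matrix (Fin m) (Fin (m + 1)) K := of g
  have hker : finrank K (LinearMap.ker G.mulVecLin) = 1 := by
    have := LinearMap.finrank_range_add_finrank_ker G.mulVecLin
    have hrank : G.rank = m := by
      rw [rank_eq_finrank_span_row]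
      exact (finrank_span_eq_card hg).trans (Fintype.card_fin m)
    rw [Matrix.rank] at hrank
    rw [hrank, finrank_fin_fun] at this
    omega
  have hmem : ∀ u, u ∈ LinearMap.ker G.mulVecLin ↔ ∀ j, g j ⬝ᵥ u = 0 := fun u => by
    simp [funext_iff, mulVec, G]
  have hcross : crossVec p g ∈ LinearMap.ker G.mulVecLin :=
    (hmem _).mpr (dotProduct_crossVec_eq_zero p g)
  obtain ⟨c, hc⟩ := (finrank_eq_one_iff_of_nonzero' ⟨_, hcross⟩
    (by simpa using crossVec_ne_zero p hg)).mp hker ⟨v, (hmem v).mpr hv⟩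
  exact ⟨c, (congrArg Subtype.val hc).symm⟩

end CrossVec

theorem gradVec_coord_eq_single (n : ℕ) (i : Fin n) (x : Fin n → ℝ) :
    gradVec n (fun y => y i) x = Pi.single i 1 := by
  funext j
  simp [gradVec, (hasFDerivAt_apply i x).fderiv, Pi.single_apply, eq_comm]

theorem jacDet_eq_det_gradVec (n : ℕ) (f : Fin n → (Fin n → ℝ) → ℝ) (x : Fin n → ℝ) :
    jacDet n f x = (of fun k => gradVec n (f k) x).det := rfl

theorem fderiv_apply_eq_gradVec_dotProduct {n : ℕ} (f : (Fin n → ℝ) → ℝ) (x v : Fin n → ℝ) :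
    fderiv ℝ f x v = gradVec n f x ⬝ᵥ v := by
  conv_lhs => rw [← Finset.univ_sum_single v]
  simp only [map_sum, dotProduct, gradVec]
  refine Finset.sum_congr rfl fun i _ => ?_
  rw [mul_comm, ← smul_eq_mul, ← map_smul, ← Pi.single_smul', smul_eq_mul, mul_one]

theorem nambuVF_eq_crossVec (m : ℕ) (C : Fin (m + 1 - 2) → (Fin (m + 1) → ℝ) → ℝ)
    (H : (Fin (m + 1) → ℝ) → ℝ) (x : Fin (m + 1) → ℝ) :
    nambuVF (m + 1) C H x = crossVec ⟨m + 1 - 2, by omega⟩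
      (fun j : Fin m => if hj : (j : ℕ) < m + 1 - 2 then gradVec (m + 1) (C ⟨j, hj⟩) x
        else gradVec (m + 1) H x) := by
  funext i
  rw [nambuVF, jacDet_eq_det_gradVec, crossVec]
  congr 2
  funext k
  revert k
  rw [Fin.forall_iff_succAbove ⟨m + 1 - 2, by omega⟩]
  refine ⟨by simp [gradVec_coord_eq_single], fun j => ?_⟩
  rw [Fin.insertNth_apply_succAbove]
  by_cases hj : (j : ℕ) < m + 1 - 2
  · rw [Fin.succAbove_of_castSucc_lt _ _ (by exact hj)]
    simp only [Fin.val_castSucc, dif_pos hj]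
  · rw [Fin.succAbove_of_le_castSucc _ _ (by exact Nat.le_of_not_lt hj)]
    simp only [Fin.val_succ, dif_neg hj, dif_neg (show ¬(j : ℕ) + 1 < m + 1 - 2 by omega),
      if_neg (show (j : ℕ) + 1 ≠ m + 1 - 2 by omega)]

theorem stmt_8_general (n : ℕ) (hn : 3 ≤ n) (Ω : Set (Fin n → ℝ))
    (X : (Fin n → ℝ) → (Fin n → ℝ))
    (C : Fin (n - 2) → (Fin n → ℝ) → ℝ) (H : (Fin n → ℝ) → ℝ)
    -- `C₁,…,C_{n−2}, H` are first integrals of `X`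
    (hCint : ∀ j, ∀ x ∈ Ω, fderiv ℝ (C j) x (X x) = 0)
    (hHint : ∀ x ∈ Ω, fderiv ℝ H x (X x) = 0)
    -- with gradients linearly independent at every point of `Ω`
    (hindep : ∀ x ∈ Ω, LinearIndependent ℝ
      (fun j : Fin (n - 1) => if hj : (j : ℕ) < n - 2
        then gradVec n (C ⟨j, hj⟩) x else gradVec n H x)) :
    -- then `V` vanishes nowhere on `Ω` and `X = ν · V` for a unique `ν` on `Ω`
    (∀ x ∈ Ω, nambuVF n C H x ≠ 0) ∧
    ∃ ν : (Fin n → ℝ) → ℝ,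
      (∀ x ∈ Ω, X x = ν x • nambuVF n C H x) ∧
      ∀ ν' : (Fin n → ℝ) → ℝ,
        (∀ x ∈ Ω, X x = ν' x • nambuVF n C H x) → ∀ x ∈ Ω, ν' x = ν x := by
  obtain ⟨m, rfl⟩ : ∃ m, n = m + 1 := ⟨n - 1, by omega⟩
  -- `hindep x hx` is accepted for families over `Fin m`, as `m + 1 - 1` reduces to `m`.
  have hV : ∀ x ∈ Ω, nambuVF (m + 1) C H x ≠ 0 := fun x hx => by
    rw [nambuVF_eq_crossVec]
    exact crossVec_ne_zero _ (hindep x hx)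
  have hX : ∀ x ∈ Ω, ∃ c : ℝ, X x = c • nambuVF (m + 1) C H x := fun x hx => by
    rw [nambuVF_eq_crossVec]
    refine exists_eq_smul_crossVec _ (hindep x hx) fun j => ?_
    split_ifs
    · rw [← fderiv_apply_eq_gradVec_dotProduct, hCint _ x hx]
    · rw [← fderiv_apply_eq_gradVec_dotProduct, hHint x hx]
  choose! ν hν using hX
  exact ⟨hV, ν, hν, fun ν' hν' x hx =>
    smul_left_injective ℝ (hV x hx) ((hν' x hx).symm.trans (hν x hx))⟩

theorem stmt_8 (n : ℕ) (hn : 3 ≤ n) (Ω : Set (Fin n → ℝ)) (hΩ : IsOpen Ω)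
    (X : (Fin n → ℝ) → (Fin n → ℝ))
    (C : Fin (n - 2) → (Fin n → ℝ) → ℝ) (H : (Fin n → ℝ) → ℝ)
    (hC : ∀ j, ContDiffOn ℝ 1 (C j) Ω) (hH : ContDiffOn ℝ 1 H Ω)
    -- `C₁,…,C_{n−2}, H` are first integrals of `X`
    (hCint : ∀ j, ∀ x ∈ Ω, fderiv ℝ (C j) x (X x) = 0)
    (hHint : ∀ x ∈ Ω, fderiv ℝ H x (X x) = 0)
    -- with gradients linearly independent at every point of `Ω`
    (hindep : ∀ x ∈ Ω, LinearIndependent ℝ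
      (fun j : Fin (n - 1) => if hj : (j : ℕ) < n - 2
        then gradVec n (C ⟨j, hj⟩) x else gradVec n H x)) :
    -- then `V` vanishes nowhere on `Ω` and `X = ν · V` for a unique `ν` on `Ω`
    (∀ x ∈ Ω, nambuVF n C H x ≠ 0) ∧
    ∃ ν : (Fin n → ℝ) → ℝ,
      (∀ x ∈ Ω, X x = ν x • nambuVF n C H x) ∧
      ∀ ν' : (Fin n → ℝ) → ℝ,
        (∀ x ∈ Ω, X x = ν' x • nambuVF n C H x) → ∀ x ∈ Ω, ν' x = ν x :=
  stmt_8_general n hn Ω X C H hCint hHint hindep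
end

section
/- Let Ω ⊆ ℝⁿ be open, let X, Y : Ω → ℝⁿ be C¹ vector fields, and let μ : Ω → ℝ be continuous with [X, Y] = μ·X on Ω. Suppose Y is complete with flow φ : ℝ × Ω → Ω (so ∂φ/∂ε(ε,x) = Y(φ(ε,x)) and φ(0,x) = x). Then for every ε ∈ ℝ and x ∈ Ω, Dφ_ε(x)·X(x) = exp(∫₀^ε μ(φ_σ(x)) dσ)·X(φ_ε(x)), where Dφ_ε(x) denotes the derivative of φ_ε = φ(ε,·) at x. In particular, the one-parameter group φ_ε maps trajectories of ẋ = X(x) to trajectories of the same system. -/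
open Set Metric
open scoped NNReal

section LinearODE

variable {F : Type*} [NormedAddCommGroup F] [NormedSpace ℝ F]

theorem IsIntegralCurveOn.hasDerivWithinAt_Ici {γ : ℝ → F} {v : ℝ → F → F} {a b t : ℝ}
    (hγ : IsIntegralCurveOn γ v (Icc a b)) (ht : t ∈ Ico a b) :
    HasDerivWithinAt γ (v t (γ t)) (Ici t) t :=
  (hγ t (Ico_subset_Icc_self ht)).mono_of_mem_nhdsWithin (Icc_mem_nhdsGE_of_mem ht)

theorem IsIntegralCurveOn.Icc_glue {u w : ℝ → F} {v : ℝ → F → F} {a c d : ℝ}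
    (hu : IsIntegralCurveOn u v (Icc a c)) (hw : IsIntegralCurveOn w v (Icc c d))
    (hac : a ≤ c) (hcd : c ≤ d) (huw : u c = w c) :
    IsIntegralCurveOn (fun t => if t ≤ c then u t else w t) v (Icc a d) := by
  set g : ℝ → F := fun t => if t ≤ c then u t else w t
  have hgu : EqOn g u (Icc a c) := fun t ht => if_pos ht.2
  have hgw : EqOn g w (Icc c d) := fun t ht => by
    rcases ht.1.eq_or_lt with rfl | hlt
    · exact (if_pos le_rfl).trans huw
    · exact if_neg hlt.not_ge
  have hwithin : ∀ {s : Set ℝ} {f : ℝ → F}, IsClosed s → EqOn g f s → IsIntegralCurveOn f v s →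
      ∀ t, HasDerivWithinAt g (v t (g t)) s t := by
    intro s f hs hgf hf t
    by_cases ht : t ∈ s
    · rw [hgf ht]
      exact (hf t ht).congr hgf (hgf ht)
    · rw [hasDerivWithinAt_iff_hasFDerivWithinAt]
      exact HasFDerivWithinAt.of_notMem_closure (by rwa [hs.closure_eq])
  intro t _
  rw [← Icc_union_Icc_eq_Icc hac hcd]
  exact (hwithin isClosed_Icc hgu hu t).union (hwithin isClosed_Icc hgw hw t)

theorem exists_nnnorm_le_of_continuousOn_Icc {A : ℝ → F →L[ℝ] F} {a b : ℝ}
    (hA : ContinuousOn A (Icc a b)) : ∃ K : ℝ≥0, ∀ t ∈ Icc a b, ‖A t‖₊ ≤ K := by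
  obtain ⟨C, hC⟩ := isCompact_Icc.exists_bound_of_continuousOn hA
  refine ⟨C.toNNReal, fun t ht => ?_⟩
  rw [← NNReal.coe_le_coe, coe_nnnorm]
  exact (hC t ht).trans (Real.le_coe_toNNReal C)

theorem IsIntegralCurveOn.eqOn_of_linear {A : ℝ → F →L[ℝ] F} {a b : ℝ}
    (hA : ContinuousOn A (Icc a b)) {u w : ℝ → F}
    (hu : IsIntegralCurveOn u (fun t => A t) (Icc a b))
    (hw : IsIntegralCurveOn w (fun t => A t) (Icc a b)) (ha : u a = w a) :
    EqOn u w (Icc a b) := by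
  obtain ⟨K, hK⟩ := exists_nnnorm_le_of_continuousOn_Icc hA
  exact ODE_solution_unique_of_mem_Icc_right (s := fun _ => univ)
    (fun t ht => ((A t).lipschitz.weaken (hK t (Ico_subset_Icc_self ht))).lipschitzOnWith)
    hu.continuousOn (fun t ht => hu.hasDerivWithinAt_Ici ht) (fun _ _ => mem_univ _)
    hw.continuousOn (fun t ht => hw.hasDerivWithinAt_Ici ht) (fun _ _ => mem_univ _) ha

variable [CompleteSpace F]

theorem exists_isIntegralCurveOn_linear_of_mul_le {A : ℝ → F →L[ℝ] F} {c d : ℝ} {K : ℝ≥0}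
    (hcd : c ≤ d) (hA : ContinuousOn A (Icc c d)) (hK : ∀ t ∈ Icc c d, ‖A t‖₊ ≤ K)
    (hlen : 2 * K * (d - c) ≤ 1) (ξ : F) :
    ∃ u : ℝ → F, u c = ξ ∧ IsIntegralCurveOn u (fun t => A t) (Icc c d) := by
  -- on an interval of length at most `1 / (2K)` the solution stays in `closedBall ξ ‖ξ‖`
  have hPL : IsPicardLindelof (fun t x => A t x) (⟨c, left_mem_Icc.2 hcd⟩ : Icc c d) ξ
      ‖ξ‖₊ 0 (2 * K * ‖ξ‖₊) K := by
    refine ⟨fun t ht => ((A t).lipschitz.weaken (hK t ht)).lipschitzOnWith,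
      fun x _ => hA.clm_apply continuousOn_const, fun t ht x hx => ?_, ?_⟩
    · have hx' : ‖x‖ ≤ 2 * ‖ξ‖ := by
        have := norm_le_of_mem_closedBall hx
        rw [coe_nnnorm] at this
        linarith
      calc ‖A t x‖ ≤ ‖A t‖ * ‖x‖ := (A t).le_opNorm x
        _ ≤ K * (2 * ‖ξ‖) := mul_le_mul (hK t ht) hx' (norm_nonneg _) K.2
        _ = _ := by push_cast; ring
    · show (2 * K * ‖ξ‖₊ : ℝ) * _ ≤ _
      have hmax : max (d - c) (c - c) = d - c := by simp [hcd]
      simp only [hmax, coe_nnnorm, NNReal.coe_zero, sub_zero]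
      nlinarith [norm_nonneg ξ]
  exact hPL.exists_eq_forall_mem_Icc_hasDerivWithinAt₀

theorem exists_isIntegralCurveOn_linear {A : ℝ → F →L[ℝ] F} {a b : ℝ} (hab : a ≤ b)
    (hA : ContinuousOn A (Icc a b)) (ξ : F) :
    ∃ u : ℝ → F, u a = ξ ∧ IsIntegralCurveOn u (fun t => A t) (Icc a b) := by
  obtain ⟨K, hK⟩ := exists_nnnorm_le_of_continuousOn_Icc hA
  set τ : ℝ := (2 * (K + 1))⁻¹
  have hτ : 0 < τ := by positivity
  have hKτ : 2 * K * τ ≤ 1 := by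
    rw [← div_eq_mul_inv, div_le_one (by positivity)]
    linarith
  set e : ℕ → ℝ := fun k => min b (a + (k + 1) * τ)
  have hae : ∀ k, a ≤ e k := fun k => le_min hab (by nlinarith)
  have he0 : e 0 ≤ a + τ := (min_le_right _ _).trans_eq (by simp)
  have hsucc : ∀ k : ℕ, e (k + 1) ≤ e k + τ := fun k => by
    simp only [e, ← min_add_add_right]
    push_cast
    exact min_le_min (by linarith) (by linarith)
  have hsub : ∀ {c} k, a ≤ c → Icc c (e k) ⊆ Icc a b := fun k hc =>
    Icc_subset_Icc hc (min_le_left _ _)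
  have step : ∀ k, ∃ u : ℝ → F, u a = ξ ∧ IsIntegralCurveOn u (fun t => A t) (Icc a (e k)) := by
    intro k
    induction k with
    | zero =>
      refine exists_isIntegralCurveOn_linear_of_mul_le (hae 0) (hA.mono (hsub 0 le_rfl))
        (fun t ht => hK t (hsub 0 le_rfl ht)) ?_ ξ
      nlinarith
    | succ k ih =>
      obtain ⟨u, hu0, hu⟩ := ih
      have hle : e k ≤ e (k + 1) := min_le_min_left b (by push_cast; nlinarith)
      obtain ⟨w, hw0, hw⟩ := exists_isIntegralCurveOn_linear_of_mul_le hle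
        (hA.mono (hsub (k + 1) (hae k))) (fun t ht => hK t (hsub (k + 1) (hae k) ht))
        (by nlinarith [hsucc k]) (u (e k))
      exact ⟨_, by simp [hae k, hu0], hu.Icc_glue hw (hae k) hle hw0.symm⟩
  obtain ⟨k, hk⟩ := exists_nat_gt ((b - a) / τ)
  have hek : e k = b := by
    refine min_eq_left ?_
    rw [div_lt_iff₀ hτ] at hk
    nlinarith
  simpa [hek] using step k

end LinearODE

section IntegralCurves

variable {E : Type*} [NormedAddCommGroup E] [NormedSpace ℝ E]

/-- The exponential bound itself keeps `f` in the neighbourhood of `g` where `v` is Lipschitz. -/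
theorem IsIntegralCurveOn.dist_le_of_lipschitzOnWith_closedBall {v : E → E} {f g : ℝ → E}
    {K : ℝ≥0} {δ a b : ℝ} (hf : IsIntegralCurveOn f (fun _ => v) (Icc a b))
    (hg : IsIntegralCurveOn g (fun _ => v) (Icc a b))
    (hv : ∀ t ∈ Icc a b, LipschitzOnWith K v (closedBall (g t) δ))
    (hfg : dist (f a) (g a) * Real.exp (K * (b - a)) < δ) :
    ∀ t ∈ Icc a b, dist (f t) (g t) ≤ dist (f a) (g a) * Real.exp (K * (t - a)) := by
  have hδ : 0 ≤ δ := (by positivity : (0 : ℝ) ≤ _).trans hfg.le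
  have gronwall : ∀ c ∈ Icc a b, (∀ t ∈ Ico a c, dist (f t) (g t) ≤ δ) →
      ∀ t ∈ Icc a c, dist (f t) (g t) ≤ dist (f a) (g a) * Real.exp (K * (t - a)) := by
    intro c hc hnear
    have hac : Icc a c ⊆ Icc a b := Icc_subset_Icc_right hc.2
    exact dist_le_of_trajectories_ODE_of_mem (s := fun t => closedBall (g t) δ)
      (fun t ht => hv t (hac (Ico_subset_Icc_self ht)))
      (hf.mono hac).continuousOn (fun t => (hf.mono hac).hasDerivWithinAt_Ici)
      (fun t ht => mem_closedBall.2 (hnear t ht))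
      (hg.mono hac).continuousOn (fun t => (hg.mono hac).hasDerivWithinAt_Ici)
      (fun t _ => mem_closedBall_self hδ) le_rfl
  suffices hnear : ∀ t ∈ Icc a b, dist (f t) (g t) < δ from fun t ht =>
    gronwall b (right_mem_Icc.2 (ht.1.trans ht.2))
      (fun s hs => (hnear s (Ico_subset_Icc_self hs)).le) t ht
  by_contra! hfar
  obtain ⟨t₁, ht₁, hfar₁⟩ := hfar
  -- the first time at which the trajectories are `δ` apart
  set B := Icc a b ∩ (fun t => dist (f t) (g t)) ⁻¹' Ici δ
  have hBbdd : BddBelow B := ⟨a, fun t ht => ht.1.1⟩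
  have hB : IsClosed B := ContinuousOn.preimage_isClosed_of_isClosed
    (continuous_dist.comp_continuousOn (hf.continuousOn.prodMk hg.continuousOn))
    isClosed_Icc isClosed_Ici
  have hsB : sInf B ∈ B := hB.csInf_mem ⟨t₁, ht₁, hfar₁⟩ hBbdd
  have hbefore : ∀ t ∈ Ico a (sInf B), dist (f t) (g t) ≤ δ := fun t ht => by
    by_contra! h
    exact (csInf_le hBbdd ⟨⟨ht.1, ht.2.le.trans hsB.1.2⟩, h.le⟩).not_gt ht.2
  have hle := gronwall _ hsB.1 hbefore _ (right_mem_Icc.2 hsB.1.1)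
  have hexp : Real.exp (K * (sInf B - a)) ≤ Real.exp (K * (b - a)) := by
    gcongr
    exact hsB.1.2
  have : δ ≤ dist (f (sInf B)) (g (sInf B)) := hsB.2
  nlinarith [dist_nonneg (x := f a) (y := g a)]

theorem IsIntegralCurveOn.norm_sub_sub_le_gronwallBound {Y : E → E} {A : ℝ → E →L[ℝ] E}
    {f g w : ℝ → E} {M : ℝ≥0} {ε a b : ℝ} (hab : a ≤ b)
    (hf : IsIntegralCurveOn f (fun _ => Y) (Icc a b))
    (hg : IsIntegralCurveOn g (fun _ => Y) (Icc a b))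
    (hw : IsIntegralCurveOn w (fun t => A t) (Icc a b)) (hA : ∀ t ∈ Icc a b, ‖A t‖₊ ≤ M)
    (hε : ∀ t ∈ Icc a b, ‖Y (f t) - Y (g t) - A t (f t - g t)‖ ≤ ε)
    (ha : w a = f a - g a) :
    ‖f b - g b - w b‖ ≤ gronwallBound 0 M ε (b - a) := by
  have := dist_le_of_approx_trajectories_ODE_of_mem (v := fun t => A t) (s := fun _ => univ)
    (f := fun t => f t - g t) (εg := 0)
    (fun t ht => ((A t).lipschitz.weaken (hA t (Ico_subset_Icc_self ht))).lipschitzOnWith)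
    (hf.continuousOn.sub hg.continuousOn)
    (fun t ht => (hf.hasDerivWithinAt_Ici ht).sub (hg.hasDerivWithinAt_Ici ht))
    (fun t ht => (dist_eq_norm _ _).trans_le (hε t (Ico_subset_Icc_self ht)))
    (fun _ _ => mem_univ _) hw.continuousOn (fun t => hw.hasDerivWithinAt_Ici)
    (fun t _ => (dist_self _).le) (fun _ _ => mem_univ _) (by rw [ha, dist_self])
    b (right_mem_Icc.2 hab)
  rwa [add_zero, dist_eq_norm] at this

theorem gronwallBound_zero_eq_mul (K ε x : ℝ) :
    gronwallBound 0 K ε x = ε * gronwallBound 0 K 1 x := by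
  by_cases hK : K = 0
  · simp [gronwallBound, hK]
  · simp only [gronwallBound, hK, if_false]
    ring

theorem IsIntegralCurveOn.clm_apply {A W : ℝ → E →L[ℝ] E} {s : Set ℝ}
    (hW : IsIntegralCurveOn W (fun t => (A t).comp) s) (h : E) :
    IsIntegralCurveOn (fun t => W t h) (fun t => A t) s := fun t ht => by
  simpa using (hW t ht).clm_apply (hasDerivWithinAt_const t s h)

theorem IsIntegralCurve.comp_neg {γ : ℝ → E} {v : ℝ → E → E} (hγ : IsIntegralCurve γ v) :
    IsIntegralCurve (fun t => γ (-t)) (fun t x => -v (-t) x) := fun t => by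
  convert (hγ (-t)).scomp t (hasDerivAt_neg t) using 1
  · rfl
  · simp

theorem isIntegralCurve_exp_integral_smul {X Y : E → E} {μ : E → ℝ} {Ω : Set E}
    (hΩ : IsOpen Ω) (hX : DifferentiableOn ℝ X Ω) (hμ : ContinuousOn μ Ω)
    (hbr : ∀ z ∈ Ω, fderiv ℝ Y z (X z) - fderiv ℝ X z (Y z) = μ z • X z)
    {γ : ℝ → E} (hγ : IsIntegralCurve γ (fun _ => Y)) (hγΩ : ∀ t, γ t ∈ Ω) :
    IsIntegralCurve (fun t => Real.exp (∫ s in (0 : ℝ)..t, μ (γ s)) • X (γ t))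
      (fun t => fderiv ℝ Y (γ t)) := by
  intro t
  have hμγ : Continuous (μ ∘ γ) := hμ.comp_continuous hγ.continuous hγΩ
  have hexp := (hμγ.integral_hasStrictDerivAt 0 t).hasDerivAt.exp
  have hXγ := ((hX.differentiableAt (hΩ.mem_nhds (hγΩ t))).hasFDerivAt).comp_hasDerivAt t (hγ t)
  convert hexp.smul hXγ using 1
  · rfl
  have hbrt := hbr _ (hγΩ t)
  rw [sub_eq_iff_eq_add] at hbrt
  dsimp only [Function.comp_apply]
  rw [map_smul, hbrt, smul_add, mul_smul, add_comm]

end IntegralCurves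

section C1Estimates

variable {E G : Type*} [NormedAddCommGroup E] [NormedSpace ℝ E] [ProperSpace E]
  [NormedAddCommGroup G] [NormedSpace ℝ G] {Y : E → G} {Ω K : Set E}

theorem ContDiffOn.exists_lipschitzOnWith_closedBall (hY : ContDiffOn ℝ 1 Y Ω) (hΩ : IsOpen Ω)
    (hK : IsCompact K) (hKΩ : K ⊆ Ω) :
    ∃ δ > 0, ∃ M : ℝ≥0, ∀ y ∈ K, closedBall y δ ⊆ Ω ∧ LipschitzOnWith M Y (closedBall y δ) := by
  obtain ⟨δ, hδ, hTΩ⟩ := hK.exists_cthickening_subset_open hΩ hKΩ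
  obtain ⟨M, hM⟩ := hK.cthickening.exists_bound_of_continuousOn
    ((hY.continuousOn_fderiv_of_isOpen hΩ le_rfl).mono hTΩ)
  refine ⟨δ, hδ, M.toNNReal, fun y hy => ?_⟩
  have hball : closedBall y δ ⊆ cthickening δ K := closedBall_subset_cthickening hy δ
  refine ⟨hball.trans hTΩ, (convex_closedBall y δ).lipschitzOnWith_of_nnnorm_fderiv_le
    (fun z hz => (hY.differentiableOn one_ne_zero).differentiableAt
      (hΩ.mem_nhds (hTΩ (hball hz)))) (fun z hz => ?_)⟩
  rw [← NNReal.coe_le_coe, coe_nnnorm]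
  exact (hM z (hball hz)).trans (Real.le_coe_toNNReal M)

theorem ContDiffOn.exists_norm_sub_sub_fderiv_le (hY : ContDiffOn ℝ 1 Y Ω) (hΩ : IsOpen Ω)
    (hK : IsCompact K) (hKΩ : K ⊆ Ω) {η : ℝ} (hη : 0 < η) :
    ∃ δ > 0, ∀ y ∈ K, ∀ z ∈ closedBall y δ,
      ‖Y z - Y y - fderiv ℝ Y y (z - y)‖ ≤ η * ‖z - y‖ := by
  obtain ⟨ε, hε, hTΩ⟩ := hK.exists_cthickening_subset_open hΩ hKΩ
  obtain ⟨δ, hδ, hunif⟩ := uniformContinuousOn_iff_le.1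
    (hK.cthickening.uniformContinuousOn_of_continuous
      ((hY.continuousOn_fderiv_of_isOpen hΩ le_rfl).mono hTΩ)) η hη
  refine ⟨min ε δ, lt_min hε hδ, fun y hy z hz => ?_⟩
  have hball : closedBall y (min ε δ) ⊆ cthickening ε K :=
    (closedBall_subset_closedBall (min_le_left _ _)).trans (closedBall_subset_cthickening hy ε)
  refine (convex_closedBall y _).norm_image_sub_le_of_norm_fderiv_le'
    (fun w hw => (hY.differentiableOn one_ne_zero).differentiableAt
      (hΩ.mem_nhds (hTΩ (hball hw)))) (fun w hw => ?_)
    (mem_closedBall_self (lt_min hε hδ).le) hz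
  rw [← dist_eq_norm]
  exact hunif w (hball hw) y (hball (mem_closedBall_self (lt_min hε hδ).le))
    ((mem_closedBall.1 hw).trans (min_le_right _ _))

end C1Estimates

section Variational

variable {E : Type*} [NormedAddCommGroup E] [NormedSpace ℝ E] [ProperSpace E]
  {Y : E → E} {Ω : Set E} {φ : ℝ → E → E}

theorem hasFDerivAt_flow (hΩ : IsOpen Ω) (hY : ContDiffOn ℝ 1 Y Ω)
    (hφ : ∀ x ∈ Ω, IsIntegralCurve (φ · x) (fun _ => Y)) (hφ0 : ∀ x ∈ Ω, φ 0 x = x)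
    {x₀ : E} (hx₀ : x₀ ∈ Ω) {b : ℝ} (hb : 0 ≤ b) (hγΩ : ∀ t ∈ Icc 0 b, φ t x₀ ∈ Ω)
    {W : ℝ → E →L[ℝ] E} (hW0 : W 0 = 1)
    (hW : IsIntegralCurveOn W (fun t => (fderiv ℝ Y (φ t x₀)).comp) (Icc 0 b)) :
    HasFDerivAt (φ b) (W b) x₀ := by
  set γ : ℝ → E := (φ · x₀)
  have hγ0 : γ 0 = x₀ := hφ0 x₀ hx₀
  have hKΩ : γ '' Icc 0 b ⊆ Ω := by rintro _ ⟨t, ht, rfl⟩; exact hγΩ t ht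
  have hK : IsCompact (γ '' Icc 0 b) := isCompact_Icc.image (hφ x₀ hx₀).continuous
  obtain ⟨δ, hδ, M, hM⟩ := hY.exists_lipschitzOnWith_closedBall hΩ hK hKΩ
  have hAM : ∀ t ∈ Icc 0 b, ‖fderiv ℝ Y (γ t)‖₊ ≤ M := fun t ht => by
    rw [← NNReal.coe_le_coe, coe_nnnorm]
    exact norm_fderiv_le_of_lipschitzOn ℝ (closedBall_mem_nhds _ hδ) (hM _ ⟨t, ht, rfl⟩).2
  have hstable : ∀ x, ‖x - x₀‖ * Real.exp (M * b) < δ →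
      x ∈ Ω ∧ ∀ t ∈ Icc 0 b, dist (φ t x) (γ t) ≤ ‖x - x₀‖ * Real.exp (M * b) := by
    intro x hx
    have hxΩ : x ∈ Ω := by
      refine (hM x₀ ⟨0, ⟨le_rfl, hb⟩, hγ0⟩).1 (mem_closedBall.2 ?_)
      rw [dist_eq_norm]
      nlinarith [norm_nonneg (x - x₀), Real.one_le_exp (by positivity : (0 : ℝ) ≤ M * b)]
    have hx0 : dist (φ 0 x) (γ 0) = ‖x - x₀‖ := by rw [hφ0 x hxΩ, hγ0, dist_eq_norm]
    refine ⟨hxΩ, fun t ht => ?_⟩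
    have hgron := ((hφ x hxΩ).isIntegralCurveOn _).dist_le_of_lipschitzOnWith_closedBall
      ((hφ x₀ hx₀).isIntegralCurveOn _) (fun t ht => (hM _ ⟨t, ht, rfl⟩).2)
      (by rwa [hx0, sub_zero]) t ht
    rw [hx0, sub_zero] at hgron
    exact hgron.trans (by gcongr; exact ht.2)
  rw [hasFDerivAt_iff_isLittleO_nhds_zero, Asymptotics.isLittleO_iff]
  intro c hc
  set C := gronwallBound 0 M 1 b
  have hC : 0 ≤ C := (gronwallBound_x0 0 M 1).symm.le.trans
    (gronwallBound_mono le_rfl zero_le_one M.2 hb)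
  set η := c / (Real.exp (M * b) * C + 1)
  have hη : 0 < η := by positivity
  have hηC : η * (Real.exp (M * b) * C) ≤ c := by
    rw [div_mul_eq_mul_div, div_le_iff₀ (by positivity)]
    nlinarith
  obtain ⟨δ₁, hδ₁, hlin⟩ := hY.exists_norm_sub_sub_fderiv_le hΩ hK hKΩ hη
  filter_upwards [ball_mem_nhds (0 : E) (by positivity : 0 < min δ δ₁ / Real.exp (M * b))]
    with h hh
  have hh' : ‖h‖ * Real.exp (M * b) < min δ δ₁ := by
    rwa [mem_ball_zero_iff, lt_div_iff₀ (Real.exp_pos _)] at hh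
  obtain ⟨hxΩ, hdist⟩ := hstable (x₀ + h) (by simpa using hh'.trans_le (min_le_left _ _))
  simp only [add_sub_cancel_left] at hdist
  have hε : ∀ t ∈ Icc 0 b, ‖Y (φ t (x₀ + h)) - Y (γ t) - fderiv ℝ Y (γ t) (φ t (x₀ + h) - γ t)‖
      ≤ η * (‖h‖ * Real.exp (M * b)) := fun t ht => by
    have hd := hdist t ht
    refine (hlin _ ⟨t, ht, rfl⟩ _
      (mem_closedBall.2 (hd.trans (hh'.le.trans (min_le_right _ _))))).trans ?_
    rw [← dist_eq_norm]
    gcongr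
  have hrem := ((hφ _ hxΩ).isIntegralCurveOn _).norm_sub_sub_le_gronwallBound hb
    ((hφ x₀ hx₀).isIntegralCurveOn _) (hW.clm_apply h) hAM hε
    (by simp [hW0, hφ0 _ hxΩ, hφ0 _ hx₀])
  rw [sub_zero, gronwallBound_zero_eq_mul] at hrem
  calc ‖φ b (x₀ + h) - φ b x₀ - W b h‖ ≤ η * (‖h‖ * Real.exp (M * b)) * C := hrem
    _ = η * (Real.exp (M * b) * C) * ‖h‖ := by ring
    _ ≤ c * ‖h‖ := by gcongr

theorem fderiv_flow_apply_eq_exp_integral_smul_of_nonneg {X : E → E} {μ : E → ℝ}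
    (hΩ : IsOpen Ω) (hX : DifferentiableOn ℝ X Ω) (hY : ContDiffOn ℝ 1 Y Ω)
    (hμ : ContinuousOn μ Ω)
    (hbr : ∀ z ∈ Ω, fderiv ℝ Y z (X z) - fderiv ℝ X z (Y z) = μ z • X z)
    (hφΩ : ∀ t, MapsTo (φ t) Ω Ω) (hφ0 : ∀ x ∈ Ω, φ 0 x = x)
    (hφ : ∀ x ∈ Ω, IsIntegralCurve (φ · x) (fun _ => Y)) {b : ℝ} (hb : 0 ≤ b) {x : E}
    (hx : x ∈ Ω) :
    fderiv ℝ (φ b) x (X x) = Real.exp (∫ s in (0 : ℝ)..b, μ (φ s x)) • X (φ b x) := by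
  set A : ℝ → E →L[ℝ] E := fun t => fderiv ℝ Y (φ t x)
  have hA : Continuous A := (hY.continuousOn_fderiv_of_isOpen hΩ le_rfl).comp_continuous
    (hφ x hx).continuous fun t => hφΩ t hx
  obtain ⟨W, hW0, hW⟩ := exists_isIntegralCurveOn_linear hb
    ((ContinuousLinearMap.compL ℝ E E E).continuous.comp hA).continuousOn 1
  rw [(hasFDerivAt_flow hΩ hY hφ hφ0 hx hb (fun t _ => hφΩ t hx) hW0 hW).fderiv]
  have hu := isIntegralCurve_exp_integral_smul hΩ hX hμ hbr (hφ x hx) fun t => hφΩ t hx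
  exact (hW.clm_apply (X x)).eqOn_of_linear hA.continuousOn (hu.isIntegralCurveOn _)
    (by simp [hW0, hφ0 x hx]) ⟨hb, le_rfl⟩

theorem fderiv_flow_apply_eq_exp_integral_smul {X : E → E} {μ : E → ℝ}
    (hΩ : IsOpen Ω) (hX : DifferentiableOn ℝ X Ω) (hY : ContDiffOn ℝ 1 Y Ω)
    (hμ : ContinuousOn μ Ω)
    (hbr : ∀ z ∈ Ω, fderiv ℝ Y z (X z) - fderiv ℝ X z (Y z) = μ z • X z)
    (hφΩ : ∀ t, MapsTo (φ t) Ω Ω) (hφ0 : ∀ x ∈ Ω, φ 0 x = x)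
    (hφ : ∀ x ∈ Ω, IsIntegralCurve (φ · x) (fun _ => Y)) (b : ℝ) {x : E} (hx : x ∈ Ω) :
    fderiv ℝ (φ b) x (X x) = Real.exp (∫ s in (0 : ℝ)..b, μ (φ s x)) • X (φ b x) := by
  rcases le_total 0 b with hb | hb
  · exact fderiv_flow_apply_eq_exp_integral_smul_of_nonneg hΩ hX hY hμ hbr hφΩ hφ0 hφ hb hx
  -- run the flow backwards, as the flow of `-Y`
  have hbr' : ∀ z ∈ Ω, fderiv ℝ (fun z => -Y z) z (X z) - fderiv ℝ X z (-Y z) = -μ z • X z :=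
    fun z hz => by
      rw [fderiv_fun_neg, neg_apply, map_neg, neg_smul, ← hbr z hz]
      abel
  have key := fderiv_flow_apply_eq_exp_integral_smul_of_nonneg (Y := fun z => -Y z)
    (μ := fun z => -μ z) (φ := fun t => φ (-t)) hΩ hX
    hY.neg hμ.neg hbr' (fun t => hφΩ (-t)) (by simpa using hφ0)
    (fun x hx => (hφ x hx).comp_neg) (neg_nonneg.2 hb) hx
  have hint : ∫ s in (0 : ℝ)..-b, -μ (φ (-s) x) = ∫ s in (0 : ℝ)..b, μ (φ s x) := by
    rw [intervalIntegral.integral_neg, intervalIntegral.integral_comp_neg (fun s => μ (φ s x)),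
      neg_neg, neg_zero, intervalIntegral.integral_symm, neg_neg]
  simpa only [neg_neg, hint] using key

end Variational

theorem stmt_13 (n : ℕ) (Ω : Set (Fin n → ℝ)) (hΩ : IsOpen Ω)
    (X Y : (Fin n → ℝ) → (Fin n → ℝ))
    (hX : ContDiffOn ℝ 1 X Ω) (hY : ContDiffOn ℝ 1 Y Ω)
    (μ : (Fin n → ℝ) → ℝ) (hμ : ContinuousOn μ Ω)
    -- `[X, Y] = μ · X` on `Ω`
    (hbr : ∀ x ∈ Ω, lieBracket n X Y x = μ x • X x)
    -- `Y` is complete with flow `φ : ℝ × Ω → Ω`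
    (φ : ℝ → (Fin n → ℝ) → (Fin n → ℝ))
    (hφΩ : ∀ ε : ℝ, Set.MapsTo (φ ε) Ω Ω)
    (hφ0 : ∀ x ∈ Ω, φ 0 x = x)
    (hflow : ∀ (ε : ℝ), ∀ x ∈ Ω, HasDerivAt (fun e => φ e x) (Y (φ ε x)) ε) :
    -- then `Dφ_ε(x)·X(x) = exp(∫₀^ε μ(φ_σ(x)) dσ) · X(φ_ε(x))`
    ∀ (ε : ℝ), ∀ x ∈ Ω,
      fderiv ℝ (φ ε) x (X x)
        = Real.exp (∫ σ in (0 : ℝ)..ε, μ (φ σ x)) • X (φ ε x) := fun ε _ hx =>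
  fderiv_flow_apply_eq_exp_integral_smul hΩ (hX.differentiableOn one_ne_zero) hY hμ hbr hφΩ hφ0
    (fun x hx t => hflow t x hx) ε hx
end

section
/- Let Ω ⊆ ℝⁿ be open, let X, Y : Ω → ℝⁿ be C¹ vector fields, and suppose Y is complete with flow φ : ℝ × Ω → Ω. Suppose there exists a function λ : ℝ × Ω → ℝ, differentiable in the first variable, with λ(0,x) = 1 for all x, such that Dφ_ε(x)·X(x) = λ(ε,x)·X(φ_ε(x)) for all ε ∈ ℝ and x ∈ Ω. Then Y is a Lie symmetry of X: [X, Y] = μ·X on Ω, where μ(x) = ∂λ/∂ε(0,x). -/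
open Set Metric Filter Topology MeasureTheory

section Flow

variable {E : Type*} [NormedAddCommGroup E] [NormedSpace ℝ E]

theorem dist_le_mul_of_hasDerivAt_of_norm_lt {Z : E → E} {ψ : ℝ → E} {r M T : ℝ}
    (hψ : ∀ s, HasDerivAt ψ (Z (ψ s)) s) (hr : 0 ≤ r)
    (hZ : ∀ z ∈ closedBall (ψ 0) r, ‖Z z‖ < M) (hT : M * T ≤ r) :
    ∀ s ∈ Icc 0 T, dist (ψ s) (ψ 0) ≤ M * s := by
  have hM : 0 < M := (norm_nonneg _).trans_lt (hZ _ (mem_closedBall_self hr))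
  have hψc : Continuous ψ := continuous_iff_continuousAt.2 fun s => (hψ s).continuousAt
  simp only [dist_eq_norm]
  refine image_norm_le_of_norm_deriv_right_lt_deriv_boundary' (f := fun s => ψ s - ψ 0)
    (f' := fun s => Z (ψ s)) (B' := fun _ => M) (hψc.sub continuous_const).continuousOn
    (fun s _ => ((hψ s).sub_const _).hasDerivWithinAt) (by simp) (by fun_prop)
    (fun s _ => by simpa using ((hasDerivAt_id s).const_mul M).hasDerivWithinAt) ?_
  intro s hs hψs
  refine hZ _ (mem_closedBall_iff_norm.2 ?_)
  rw [hψs]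
  exact (mul_le_mul_of_nonneg_left hs.2.le hM.le).trans hT

variable {Ω : Set E} {Y : E → E} {φ : ℝ → E → E} {x : E}

theorem continuous_flow_apply (hflow : ∀ ε, ∀ y ∈ Ω, HasDerivAt (fun e => φ e y) (Y (φ ε y)) ε)
    {y : E} (hy : y ∈ Ω) : Continuous fun e => φ e y :=
  continuous_iff_continuousAt.2 fun e => (hflow e y hy).continuousAt

theorem ContinuousOn.comp_flow_apply {F : Type*} [TopologicalSpace F] {f : E → F}
    (hf : ContinuousOn f Ω) (hφΩ : ∀ ε, MapsTo (φ ε) Ω Ω)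
    (hflow : ∀ ε, ∀ y ∈ Ω, HasDerivAt (fun e => φ e y) (Y (φ ε y)) ε) {y : E} (hy : y ∈ Ω) :
    Continuous fun s => f (φ s y) :=
  hf.comp_continuous (continuous_flow_apply hflow hy) fun s => hφΩ s hy

theorem lipschitzOnWith_flow {s : Set E} {K : NNReal} {T : ℝ} (hY : LipschitzOnWith K Y s)
    (hflow : ∀ ε, ∀ y ∈ Ω, HasDerivAt (fun e => φ e y) (Y (φ ε y)) ε)
    (hφ0 : ∀ y ∈ Ω, φ 0 y = y) (hmaps : ∀ τ ∈ Icc 0 T, MapsTo (φ τ) Ω s) :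
    ∀ τ ∈ Icc 0 T, LipschitzOnWith (Real.exp (K * T)).toNNReal (φ τ) Ω := by
  intro τ hτ
  refine LipschitzOnWith.of_dist_le_mul fun y hy z hz => ?_
  have hgronwall := dist_le_of_trajectories_ODE_of_mem (v := fun _ => Y) (s := fun _ => s)
    (a := 0) (fun _ _ => hY) (continuous_flow_apply hflow hy).continuousOn
    (fun e _ => (hflow e y hy).hasDerivWithinAt) (fun e he => hmaps e (Ico_subset_Icc_self he) hy)
    (continuous_flow_apply hflow hz).continuousOn (fun e _ => (hflow e z hz).hasDerivWithinAt)
    (fun e he => hmaps e (Ico_subset_Icc_self he) hz) le_rfl τ hτ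
  rw [hφ0 y hy, hφ0 z hz, sub_zero] at hgronwall
  rw [Real.coe_toNNReal _ (Real.exp_pos _).le, mul_comm]
  exact hgronwall.trans (mul_le_mul_of_nonneg_left
    (Real.exp_le_exp.2 (mul_le_mul_of_nonneg_left hτ.2 K.2)) dist_nonneg)

theorem exists_lipschitzOnWith_comp_flow (hΩ : Ω ∈ 𝓝 x) (hY : ContDiffAt ℝ 1 Y x)
    (hφ0 : ∀ y ∈ Ω, φ 0 y = y)
    (hflow : ∀ ε, ∀ y ∈ Ω, HasDerivAt (fun e => φ e y) (Y (φ ε y)) ε) :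
    ∃ r > 0, ∃ T > 0, ∃ K, closedBall x r ⊆ Ω ∧
      ∀ τ ∈ Icc 0 T, LipschitzOnWith K (fun y => Y (φ τ y)) (closedBall x r) := by
  obtain ⟨L, t, ht, hLip⟩ := hY.exists_lipschitzOnWith
  set M := ‖Y x‖ + 1
  have hbound : ∀ᶠ z in 𝓝 x, ‖Y z‖ < M :=
    hY.continuousAt.norm.eventually_lt continuousAt_const (lt_add_one _)
  obtain ⟨ρ, hρ, hρsub⟩ := nhds_basis_closedBall.mem_iff.1 (inter_mem (inter_mem hΩ ht) hbound)
  have hM : 0 < M := by positivity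
  set r := ρ / 2
  have hr : 0 < r := by positivity
  have hrρ : r + r = ρ := add_halves ρ
  have hrΩ : closedBall x r ⊆ Ω :=
    fun y hy => (hρsub (closedBall_subset_closedBall (by linarith) hy)).1.1
  have hmaps : ∀ τ ∈ Icc 0 (r / M), MapsTo (φ τ) (closedBall x r) (closedBall x ρ) := by
    intro τ hτ y hy
    have hyΩ := hrΩ hy
    have hyρ : closedBall y r ⊆ closedBall x ρ :=
      closedBall_subset_closedBall' (by linarith [mem_closedBall.1 hy])
    have hstay := dist_le_mul_of_hasDerivAt_of_norm_lt (fun s => hflow s y hyΩ) hr.le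
      (fun z hz => (hρsub (hyρ (by rwa [hφ0 y hyΩ] at hz))).2)
      (mul_div_cancel₀ r hM.ne').le τ hτ
    rw [hφ0 y hyΩ] at hstay
    exact hyρ (mem_closedBall.2 (hstay.trans
      ((mul_le_mul_of_nonneg_left hτ.2 hM.le).trans_eq (mul_div_cancel₀ r hM.ne'))))
  have hLipρ : LipschitzOnWith L Y (closedBall x ρ) := hLip.mono fun z hz => (hρsub hz).1.2
  exact ⟨r, hr, r / M, by positivity, _, hrΩ, fun τ hτ => hLipρ.comp
    (lipschitzOnWith_flow hLipρ (fun ε y hy => hflow ε y (hrΩ hy))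
      (fun y hy => hφ0 y (hrΩ hy)) hmaps τ hτ) (hmaps τ hτ)⟩

theorem flow_sub_eq_integral [CompleteSpace E] (hY : ContinuousOn Y Ω)
    (hφΩ : ∀ ε, MapsTo (φ ε) Ω Ω) (hφ0 : ∀ y ∈ Ω, φ 0 y = y)
    (hflow : ∀ ε, ∀ y ∈ Ω, HasDerivAt (fun e => φ e y) (Y (φ ε y)) ε) {y : E} (hy : y ∈ Ω)
    (ε : ℝ) : φ ε y - y = ∫ s in 0..ε, Y (φ s y) := by
  rw [intervalIntegral.integral_eq_sub_of_hasDerivAt (fun s _ => hflow s y hy)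
    ((hY.comp_flow_apply hφΩ hflow hy).intervalIntegrable 0 ε), hφ0 y hy]

theorem fderiv_flow_apply_eq_add_integral [CompleteSpace E] (hΩ : IsOpen Ω)
    (hY : ContDiffOn ℝ 1 Y Ω) (hφΩ : ∀ ε, MapsTo (φ ε) Ω Ω) (hφ0 : ∀ y ∈ Ω, φ 0 y = y)
    (hflow : ∀ ε, ∀ y ∈ Ω, HasDerivAt (fun e => φ e y) (Y (φ ε y)) ε) (hx : x ∈ Ω)
    {r ε : ℝ} {K : NNReal} (hr : 0 < r) (hrΩ : closedBall x r ⊆ Ω)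
    (hLip : ∀ s ∈ Icc 0 ε, LipschitzOnWith K (fun y => Y (φ s y)) (closedBall x r))
    (hε : 0 ≤ ε) {v : E} (hdiff : ∀ s ∈ Icc 0 ε, DifferentiableAt ℝ (φ s) x)
    (hcont : Continuous fun s => fderiv ℝ (φ s) x v) :
    fderiv ℝ (φ ε) x v = v + ∫ s in 0..ε, fderiv ℝ Y (φ s x) (fderiv ℝ (φ s) x v) := by
  set c : ℝ → E := fun t => x + t • v
  have hc : HasDerivAt c v 0 := by
    simpa [c] using ((hasDerivAt_id (0 : ℝ)).smul_const v).const_add x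
  have hc0 : c 0 = x := by simp [c]
  have hcball : c ⁻¹' closedBall x r ∈ 𝓝 0 :=
    hc.continuousAt.preimage_mem_nhds (hc0 ▸ closedBall_mem_nhds x hr)
  have hclip : LipschitzWith ‖v‖₊ c := LipschitzWith.of_dist_le_mul fun a b => by
    simp [c, dist_eq_norm, ← sub_smul, norm_smul, mul_comm]
  have hcΩ : ∀ t ∈ c ⁻¹' closedBall x r, c t ∈ Ω := fun t ht => hrΩ ht
  have hYc : ∀ y ∈ Ω, Continuous fun s => Y (φ s y) := fun y hy =>
    hY.continuousOn.comp_flow_apply hφΩ hflow hy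
  have hd : Continuous fun s => fderiv ℝ Y (φ s x) (fderiv ℝ (φ s) x v) :=
    ((hY.continuousOn_fderiv_of_isOpen hΩ le_rfl).comp_flow_apply hφΩ hflow hx).clm_apply hcont
  have hIoc : uIoc 0 ε ⊆ Icc 0 ε := by rw [uIoc_of_le hε]; exact Ioc_subset_Icc_self
  have hLip' : ∀ s ∈ uIoc 0 ε, LipschitzOnWith (Real.nnabs (K * ‖v‖₊ : NNReal))
      (fun t => Y (φ s (c t))) (c ⁻¹' closedBall x r) := fun s hs => by
    rw [Real.nnabs_coe]
    exact (hLip s (hIoc hs)).comp hclip.lipschitzOnWith (mapsTo_preimage _ _)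
  have hdiffF : ∀ s ∈ uIoc 0 ε, HasDerivAt (fun t => Y (φ s (c t)))
      (fderiv ℝ Y (φ s x) (fderiv ℝ (φ s) x v)) 0 := fun s hs => by
    have hφs := (hdiff s (hIoc hs)).hasFDerivAt.comp_hasDerivAt_of_eq 0 hc hc0.symm
    exact ((hY.differentiableOn one_ne_zero).differentiableAt
      (hΩ.mem_nhds (hφΩ s hx))).hasFDerivAt.comp_hasDerivAt_of_eq 0 hφs (by simp [hc0])
  obtain ⟨-, hint⟩ := intervalIntegral.hasDerivAt_integral_of_dominated_loc_of_lip (μ := volume)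
    hcball (eventually_of_mem hcball fun t ht => (hYc _ (hcΩ t ht)).aestronglyMeasurable)
    ((hYc _ (hcΩ 0 (mem_of_mem_nhds hcball))).intervalIntegrable 0 ε) hd.aestronglyMeasurable
    (ae_of_all _ hLip') intervalIntegrable_const (ae_of_all _ hdiffF)
  have hsub : HasDerivAt (fun t => φ ε (c t) - c t)
      (∫ s in 0..ε, fderiv ℝ Y (φ s x) (fderiv ℝ (φ s) x v)) 0 :=
    hint.congr_of_eventuallyEq (eventually_of_mem hcball fun t ht =>
      flow_sub_eq_integral hY.continuousOn hφΩ hφ0 hflow (hcΩ t ht) ε)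
  rw [add_comm]
  exact ((hdiff ε ⟨hε, le_rfl⟩).hasFDerivAt.comp_hasDerivAt_of_eq 0 hc hc0.symm).unique
    (by simpa [Function.comp_def, Pi.add_def] using hsub.add hc)

theorem eventually_fderiv_flow_apply_eq_add_integral [CompleteSpace E] (hΩ : IsOpen Ω)
    (hY : ContDiffOn ℝ 1 Y Ω) (hφΩ : ∀ ε, MapsTo (φ ε) Ω Ω) (hφ0 : ∀ y ∈ Ω, φ 0 y = y)
    (hflow : ∀ ε, ∀ y ∈ Ω, HasDerivAt (fun e => φ e y) (Y (φ ε y)) ε) (hx : x ∈ Ω) {v : E}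
    (hdiff : ∀ᶠ s in 𝓝[≥] 0, DifferentiableAt ℝ (φ s) x)
    (hcont : Continuous fun s => fderiv ℝ (φ s) x v) :
    ∀ᶠ ε in 𝓝[≥] 0,
      fderiv ℝ (φ ε) x v = v + ∫ s in 0..ε, fderiv ℝ Y (φ s x) (fderiv ℝ (φ s) x v) := by
  obtain ⟨r, hr, T, hT, K, hrΩ, hLip⟩ := exists_lipschitzOnWith_comp_flow (hΩ.mem_nhds hx)
    (hY.contDiffAt (hΩ.mem_nhds hx)) hφ0 hflow
  obtain ⟨a, ha, hdiffa⟩ := mem_nhdsGE_iff_exists_Ico_subset.1 hdiff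
  filter_upwards [Ico_mem_nhdsGE (lt_min ha hT)] with ε hε
  exact fderiv_flow_apply_eq_add_integral hΩ hY hφΩ hφ0 hflow hx hr hrΩ
    (fun s hs => hLip s ⟨hs.1, hs.2.trans (hε.2.le.trans (min_le_right _ _))⟩) hε.1
    (fun s hs => hdiffa ⟨hs.1, hs.2.trans_lt (hε.2.trans_le (min_le_left _ _))⟩) hcont

theorem hasDerivAt_fderiv_flow_apply [CompleteSpace E] (hΩ : IsOpen Ω)
    (hY : ContDiffOn ℝ 1 Y Ω) (hφΩ : ∀ ε, MapsTo (φ ε) Ω Ω) (hφ0 : ∀ y ∈ Ω, φ 0 y = y)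
    (hflow : ∀ ε, ∀ y ∈ Ω, HasDerivAt (fun e => φ e y) (Y (φ ε y)) ε) (hx : x ∈ Ω) {v : E}
    (hdiff : ∀ᶠ s in 𝓝 0, DifferentiableAt ℝ (φ s) x)
    (hcont : Continuous fun s => fderiv ℝ (φ s) x v) :
    HasDerivAt (fun s => fderiv ℝ (φ s) x v) (fderiv ℝ Y x v) 0 := by
  set d := fun s => fderiv ℝ Y (φ s x) (fderiv ℝ (φ s) x v)
  have hd : Continuous d :=
    ((hY.continuousOn_fderiv_of_isOpen hΩ le_rfl).comp_flow_apply hφΩ hflow hx).clm_apply hcont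
  have hforward := eventually_fderiv_flow_apply_eq_add_integral hΩ hY hφΩ hφ0 hflow hx
    (nhdsWithin_le_nhds hdiff) hcont
  -- Negative times: `e ↦ φ (-e)` is a flow of `-Y`.
  have hbackward := eventually_fderiv_flow_apply_eq_add_integral (Y := -Y)
    (φ := fun e => φ (-e)) hΩ hY.neg (fun e => hφΩ (-e)) (by simpa using hφ0)
    (fun e y hy => by simpa [Function.comp_def] using (hflow (-e) y hy).scomp e (hasDerivAt_neg e))
    hx (nhdsWithin_le_nhds ((continuous_neg.tendsto' (0 : ℝ) 0 neg_zero).eventually hdiff))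
    (hcont.comp continuous_neg)
  have hneg : Tendsto Neg.neg (𝓝[≤] (0 : ℝ)) (𝓝[≥] 0) := by
    simpa using tendsto_neg_nhdsLE (a := (0 : ℝ))
  have heq : (fun ε => fderiv ℝ (φ ε) x v) =ᶠ[𝓝 0] fun ε => v + ∫ s in 0..ε, d s := by
    rw [← nhdsLE_sup_nhdsGE]
    refine eventually_sup.2 ⟨?_, hforward⟩
    filter_upwards [hneg.eventually hbackward] with ε hε
    simp only [neg_neg] at hε
    rw [hε, intervalIntegral.integral_symm]
    simp only [fderiv_neg, neg_apply, intervalIntegral.integral_neg,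
      intervalIntegral.integral_comp_neg fun s => d s, neg_neg, neg_zero, d]
  have hφ0' : fderiv ℝ (φ 0) x = ContinuousLinearMap.id ℝ E := by
    have : φ 0 =ᶠ[𝓝 x] id := eventually_of_mem (hΩ.mem_nhds hx) hφ0
    rw [this.fderiv_eq, fderiv_id]
  have hftc := (intervalIntegral.integral_hasDerivAt_right (hd.intervalIntegrable 0 0)
    (hd.stronglyMeasurableAtFilter _ _) hd.continuousAt).const_add v
  simp only [d, hφ0 x hx, hφ0', ContinuousLinearMap.id_apply] at hftc
  exact hftc.congr_of_eventuallyEq heq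

end Flow

theorem stmt_14 (n : ℕ) (Ω : Set (Fin n → ℝ)) (hΩ : IsOpen Ω)
    (X Y : (Fin n → ℝ) → (Fin n → ℝ))
    (hX : ContDiffOn ℝ 1 X Ω) (hY : ContDiffOn ℝ 1 Y Ω)
    -- `Y` is complete with flow `φ : ℝ × Ω → Ω`
    (φ : ℝ → (Fin n → ℝ) → (Fin n → ℝ))
    (hφΩ : ∀ ε : ℝ, Set.MapsTo (φ ε) Ω Ω)
    (hφ0 : ∀ x ∈ Ω, φ 0 x = x)
    (hflow : ∀ (ε : ℝ), ∀ x ∈ Ω, HasDerivAt (fun e => φ e x) (Y (φ ε x)) ε)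
    -- `λ : ℝ × Ω → ℝ` is differentiable in its first variable with `λ(0,x) = 1`
    (lam : ℝ → (Fin n → ℝ) → ℝ)
    (hlam : ∀ x ∈ Ω, ∀ ε : ℝ, DifferentiableAt ℝ (fun e => lam e x) ε)
    (hlam0 : ∀ x ∈ Ω, lam 0 x = 1)
    -- `Dφ_ε(x)·X(x) = λ(ε,x)·X(φ_ε(x))` for all `ε` and `x ∈ Ω`
    (hpush : ∀ (ε : ℝ), ∀ x ∈ Ω,
      fderiv ℝ (φ ε) x (X x) = lam ε x • X (φ ε x)) :
    -- then `Y` is a Lie symmetry of `X`: `[X, Y] = μ · X` with `μ(x) = ∂λ/∂ε(0,x)`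
    ∀ x ∈ Ω, lieBracket n X Y x = deriv (fun e => lam e x) 0 • X x := by
  intro x hx
  set g := fun ε => fderiv ℝ (φ ε) x (X x)
  have hg : g = fun ε => lam ε x • X (φ ε x) := funext fun ε => hpush ε x hx
  have hg0 : g 0 = X x := by rw [hg]; simp only [hlam0 x hx, hφ0 x hx, one_smul]
  have hg_cont : Continuous g := hg ▸
    (continuous_iff_continuousAt.2 fun ε => (hlam x hx ε).continuousAt).smul
      (hX.continuousOn.comp_flow_apply hφΩ hflow hx)
  have hg_variational : HasDerivAt g (fderiv ℝ Y x (X x)) 0 := by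
    by_cases hXx : X x = 0
    · simpa [g, hXx] using hasDerivAt_const (0 : ℝ) (0 : Fin n → ℝ)
    refine hasDerivAt_fderiv_flow_apply hΩ hY hφΩ hφ0 hflow hx ?_ hg_cont
    filter_upwards [hg_cont.continuousAt.eventually_ne (hg0 ▸ hXx)] with ε hε
    by_contra hφε
    exact hε (by simp [g, fderiv_zero_of_not_differentiableAt hφε])
  have hg_product : HasDerivAt g (deriv (fun e => lam e x) 0 • X x + fderiv ℝ X x (Y x)) 0 := by
    have hXφ := ((hX.differentiableOn one_ne_zero).differentiableAt
      (hΩ.mem_nhds hx)).hasFDerivAt.comp_hasDerivAt_of_eq 0 (hflow 0 x hx) (hφ0 x hx).symm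
    rw [hg]
    simpa [hlam0 x hx, hφ0 x hx, add_comm, Function.comp_def, Pi.smul_def'] using
      (hlam x hx 0).hasDerivAt.smul hXφ
  rw [lieBracket, hg_variational.unique hg_product]
  abel
end
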